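/- arXiv:2505.22996 — 3 statements merged into one kernel-verified Lean document; each statement's English description precedes it below -/
import Mathlib

section
/- Let (Ω,ℱ,ℙ,σ) be an ergodic measure-preserving system and β: Ω → ℝ a bounded measurable function with β_ω ≥ β* > 0 for all ω. Suppose λ_ω^ε = 1 − ε(β_ω + o(ε)/ε) with the error uniform in ω, i.e. λ_ω^ε = 1 − ε β_ω + o(ε) uniformly in ω. Fix t > 0. Then for ℙ-a.e. ω, lim_{ε→0} (ε/t) ∑_{i=0}^{t/ε − 1} log λ_{σ^i ω}^ε = −∫_Ω β dℙ; equivalently, the product λ_ω^{ε,(t/ε)} := ∏_{i=0}^{t/ε−1} λ_{σ^i ω}^ε converges to exp(−t ∫_Ω β dℙ) as ε → 0 along values with t/ε ∈ ℕ. -/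
open MeasureTheory Filter

section Aux

variable {Ω : Type*} [MeasurableSpace Ω] {μ : Measure Ω}

/-- Garsia's maximal ergodic theorem for bounded measurable functions. -/
private lemma maximal_ergodic [IsProbabilityMeasure μ] {σ : Ω → Ω}
    (hσ : MeasurePreserving σ μ μ) {g : Ω → ℝ} (hg : Measurable g)
    {K : ℝ} (hK0 : 0 ≤ K) (hK : ∀ ω, |g ω| ≤ K) :
    0 ≤ ∫ ω in {ω | ∃ n : ℕ, 0 < ∑ i ∈ Finset.range (n + 1), g (σ^[i] ω)}, g ω ∂μ := by
  set S : ℕ → Ω → ℝ := fun n ω => ∑ i ∈ Finset.range n, g (σ^[i] ω) with hSdef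
  have hS_succ : ∀ n ω, S (n + 1) ω = g ω + S n (σ ω) := by
    intro n ω
    simp only [hSdef]
    rw [Finset.sum_range_succ']
    simp [Function.iterate_succ_apply, add_comm]
  have hS1 : ∀ ω, S 1 ω = g ω := fun ω => by simp [hSdef]
  -- the maximal functions
  let Φ : ℕ → Ω → ℝ := fun N => Nat.rec (fun _ => 0) (fun _ ih ω => max 0 (g ω + ih (σ ω))) N
  have hΦ0 : ∀ ω, Φ 0 ω = 0 := fun _ => rfl
  have hΦs : ∀ N ω, Φ (N + 1) ω = max 0 (g ω + Φ N (σ ω)) := fun _ _ => rfl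
  have hΦmeas : ∀ N, Measurable (Φ N) := by
    intro N; induction N with
    | zero => exact measurable_const
    | succ N ih => exact measurable_const.max (hg.add (ih.comp hσ.measurable))
  have hΦnonneg : ∀ N ω, 0 ≤ Φ N ω := by
    intro N ω; cases N with
    | zero => exact le_refl 0
    | succ N => exact le_max_left _ _
  have hΦmono : ∀ N ω, Φ N ω ≤ Φ (N + 1) ω := by
    intro N; induction N with
    | zero => intro ω; rw [hΦ0]; exact hΦnonneg 1 ω
    | succ N ih =>
      intro ω
      rw [hΦs N ω, hΦs (N + 1) ω]
      exact max_le_max (le_refl 0) (add_le_add_right (ih (σ ω)) _)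
  have hΦbd : ∀ N ω, Φ N ω ≤ N * K := by
    intro N; induction N with
    | zero => intro ω; rw [hΦ0]; simp
    | succ N ih =>
      intro ω
      rw [hΦs N ω]
      refine max_le (by positivity) ?_
      have h1 := (abs_le.1 (hK ω)).2
      have h2 := ih (σ ω)
      push_cast; nlinarith
  have hS_le_Φ : ∀ n ω, S (n + 1) ω ≤ Φ (n + 1) ω := by
    intro n; induction n with
    | zero =>
      intro ω
      rw [hS1, hΦs 0 ω, hΦ0, add_zero]
      exact le_max_right _ _
    | succ n ih =>
      intro ω
      rw [hS_succ, hΦs (n + 1) ω]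
      exact le_trans (add_le_add_right (ih (σ ω)) _) (le_max_right _ _)
  have hΦ_le_S : ∀ N ω, 0 < Φ (N + 1) ω → ∃ n : ℕ, Φ (N + 1) ω ≤ S (n + 1) ω := by
    intro N; induction N with
    | zero =>
      intro ω h
      simp only [Nat.zero_add] at h ⊢
      have h1 : Φ 1 ω = max 0 (g ω) := by simpa [hΦ0] using hΦs 0 ω
      rw [h1] at h
      have hx : 0 < g ω := (lt_max_iff.1 h).resolve_left (lt_irrefl 0)
      exact ⟨0, by rw [h1, hS1, max_eq_right hx.le]⟩
    | succ N ih =>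
      intro ω h
      have h1 : Φ (N + 1 + 1) ω = max 0 (g ω + Φ (N + 1) (σ ω)) := hΦs (N + 1) ω
      rw [h1] at h
      have hX : 0 < g ω + Φ (N + 1) (σ ω) := (lt_max_iff.1 h).resolve_left (lt_irrefl 0)
      by_cases hc : 0 < Φ (N + 1) (σ ω)
      · obtain ⟨n, hn⟩ := ih (σ ω) hc
        refine ⟨n + 1, ?_⟩
        rw [h1, hS_succ]
        exact max_le (by linarith) (add_le_add_right hn _)
      · have h0 : Φ (N + 1) (σ ω) = 0 := le_antisymm (not_lt.1 hc) (hΦnonneg (N + 1) (σ ω))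
        rw [h0, add_zero] at hX
        exact ⟨0, by rw [h1, hS1, h0, add_zero, max_eq_right hX.le]⟩
  -- integrability
  have hgint : Integrable g μ := by
    refine (integrable_const K).mono' hg.aestronglyMeasurable ?_
    exact Eventually.of_forall fun ω => by simpa [Real.norm_eq_abs] using hK ω
  have hΦint : ∀ N, Integrable (Φ N) μ := by
    intro N
    refine (integrable_const ((N : ℝ) * K)).mono' (hΦmeas N).aestronglyMeasurable ?_
    refine Eventually.of_forall fun ω => ?_
    rw [Real.norm_eq_abs, abs_of_nonneg (hΦnonneg N ω)]
    exact hΦbd N ω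
  -- the increasing sets
  set E : ℕ → Set Ω := fun N => {ω | 0 < Φ (N + 1) ω} with hEdef
  have hEmeas : ∀ N, MeasurableSet (E N) := fun N => measurableSet_lt measurable_const (hΦmeas (N + 1))
  have hEmono : Monotone E := by
    intro M N hMN ω hω
    have : Φ (M + 1) ω ≤ Φ (N + 1) ω := by
      clear hω
      induction N with
      | zero => interval_cases M; exact le_rfl
      | succ N ih =>
        rcases Nat.lt_or_ge M (N + 1) with h' | h'
        · exact le_trans (ih (Nat.lt_succ_iff.1 h')) (hΦmono (N + 1) ω)
        · have : M = N + 1 := le_antisymm hMN h'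
          subst this; exact le_rfl
    exact lt_of_lt_of_le hω this
  have hEunion : {ω | ∃ n : ℕ, 0 < S (n + 1) ω} = ⋃ N, E N := by
    ext ω
    simp only [Set.mem_setOf_eq, Set.mem_iUnion, hEdef]
    constructor
    · rintro ⟨n, hn⟩; exact ⟨n, lt_of_lt_of_le hn (hS_le_Φ n ω)⟩
    · rintro ⟨N, hN⟩
      obtain ⟨n, hn⟩ := hΦ_le_S N ω hN
      exact ⟨n, lt_of_lt_of_le hN hn⟩
  -- per-N bound : 0 ≤ ∫_{E N} g
  have hENbound : ∀ N, 0 ≤ ∫ ω in E N, g ω ∂μ := by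
    intro N
    set ψ : Ω → ℝ := fun ω => Φ (N + 1) ω - Φ (N + 1) (σ ω) with hψdef
    have hcomp' : Integrable (fun ω => Φ (N + 1) (σ ω)) μ :=
      (hσ.integrable_comp (hΦmeas (N + 1)).aestronglyMeasurable).2 (hΦint (N + 1))
    have hψint : Integrable ψ μ := (hΦint (N + 1)).sub hcomp'
    have hψtot : ∫ ω, ψ ω ∂μ = 0 := by
      have hcomp : ∫ ω, Φ (N + 1) (σ ω) ∂μ = ∫ ω, Φ (N + 1) ω ∂μ := by
        rw [← integral_map hσ.measurable.aemeasurable]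
        · rw [hσ.map_eq]
        · rw [hσ.map_eq]; exact (hΦmeas (N + 1)).aestronglyMeasurable
      simp only [hψdef]
      rw [integral_sub (hΦint (N + 1)) hcomp', hcomp, sub_self]
    have h1 : ∀ ω ∈ E N, ψ ω ≤ g ω := by
      intro ω hω
      have hpos : 0 < Φ (N + 1) ω := hω
      have heq : Φ (N + 1) ω = g ω + Φ N (σ ω) := by
        rw [hΦs N ω] at hpos ⊢
        rcases lt_max_iff.1 hpos with h' | h'
        · exact absurd h' (lt_irrefl 0)
        · exact max_eq_right h'.le
      simp only [hψdef, heq]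
      have := hΦmono N (σ ω)
      linarith
    have h2 : ∀ ω ∈ (E N)ᶜ, ψ ω ≤ 0 := by
      intro ω hω
      have h0 : Φ (N + 1) ω = 0 := le_antisymm (not_lt.1 hω) (hΦnonneg (N + 1) ω)
      simp only [hψdef, h0]
      linarith [hΦnonneg (N + 1) (σ ω)]
    have key : (0:ℝ) ≤ ∫ ω in E N, ψ ω ∂μ := by
      have hsplit := integral_add_compl (hEmeas N) hψint
      have hcompl : ∫ ω in (E N)ᶜ, ψ ω ∂μ ≤ 0 :=
        setIntegral_nonpos (hEmeas N).compl h2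
      linarith [hsplit, hψtot, hcompl]
    calc (0:ℝ) ≤ ∫ ω in E N, ψ ω ∂μ := key
      _ ≤ ∫ ω in E N, g ω ∂μ :=
        setIntegral_mono_on (hψint.integrableOn) (hgint.integrableOn) (hEmeas N) h1
  -- pass to the limit
  have hlim := tendsto_setIntegral_of_monotone hEmeas hEmono
      (hgint.integrableOn (s := ⋃ N, E N))
  have : 0 ≤ ∫ ω in ⋃ N, E N, g ω ∂μ := ge_of_tendsto' hlim hENbound
  rwa [hEunion]

private lemma limsup_le_of_sub' {u v : ℕ → ℝ} {M : ℝ}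
    (hu : ∀ n, |u n| ≤ M) (hv : ∀ n, |v n| ≤ M)
    (h : Tendsto (fun n => u n - v n) atTop (nhds 0)) :
    limsup u atTop ≤ limsup v atTop := by
  refine le_of_forall_pos_le_add fun ε hε => ?_
  have hev : ∀ᶠ n in atTop, u n ≤ v n + ε := by
    filter_upwards [NormedAddCommGroup.tendsto_nhds_zero.1 h ε hε] with n hn
    have := (abs_lt.1 (by simpa [Real.norm_eq_abs] using hn)).2
    linarith
  have hco : IsCoboundedUnder (· ≤ ·) atTop u :=
    IsBoundedUnder.isCoboundedUnder_le ⟨-M, eventually_map.2 (Eventually.of_forall fun n => (abs_le.1 (hu n)).1)⟩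
  have hbd : IsBoundedUnder (· ≤ ·) atTop (fun n => v n + ε) :=
    ⟨M + ε, eventually_map.2 (Eventually.of_forall fun n => add_le_add_left (abs_le.1 (hv n)).2 ε)⟩
  calc limsup u atTop ≤ limsup (fun n => v n + ε) atTop := limsup_le_limsup hev hco hbd
    _ = limsup v atTop + ε := limsup_add_const atTop v ε
        ⟨M, eventually_map.2 (Eventually.of_forall fun n => (abs_le.1 (hv n)).2)⟩
        (IsBoundedUnder.isCoboundedUnder_le ⟨-M, eventually_map.2 (Eventually.of_forall fun n => (abs_le.1 (hv n)).1)⟩)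

private lemma limsup_eq_of_sub' {u v : ℕ → ℝ} {M : ℝ}
    (hu : ∀ n, |u n| ≤ M) (hv : ∀ n, |v n| ≤ M)
    (h : Tendsto (fun n => u n - v n) atTop (nhds 0)) :
    limsup u atTop = limsup v atTop := by
  refine le_antisymm (limsup_le_of_sub' hu hv h) (limsup_le_of_sub' hv hu ?_)
  have := h.neg
  simpa [neg_sub] using this

/-- Birkhoff: limsup of ergodic averages is a.e. at most the mean. -/
private lemma birkhoff_limsup_le [IsProbabilityMeasure μ] {σ : Ω → Ω} (hσ : Ergodic σ μ)
    {f : Ω → ℝ} (hf : Measurable f) {K : ℝ} (hK0 : 0 ≤ K) (hK : ∀ ω, |f ω| ≤ K) :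
    ∀ᵐ ω ∂μ, limsup (fun n : ℕ => (∑ i ∈ Finset.range (n + 1), f (σ^[i] ω)) / (n + 1)) atTop
      ≤ ∫ ω, f ω ∂μ := by
  set A := ∫ ω, f ω ∂μ with hA
  set u : Ω → ℕ → ℝ := fun ω n => (∑ i ∈ Finset.range (n + 1), f (σ^[i] ω)) / (n + 1)
    with hudef
  have hu_abs : ∀ ω n, |u ω n| ≤ K := by
    intro ω n
    have hpos : (0:ℝ) < (n:ℝ) + 1 := by positivity
    simp only [hudef]
    rw [abs_div, abs_of_pos hpos, div_le_iff₀ hpos]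
    calc |∑ i ∈ Finset.range (n + 1), f (σ^[i] ω)|
        ≤ ∑ i ∈ Finset.range (n + 1), |f (σ^[i] ω)| := Finset.abs_sum_le_sum_abs _ _
      _ ≤ ∑ i ∈ Finset.range (n + 1), K := Finset.sum_le_sum (fun i _ => hK _)
      _ = K * ((n:ℝ) + 1) := by rw [Finset.sum_const, Finset.card_range]; push_cast; ring
  have hu_meas : ∀ n, Measurable (fun ω => u ω n) := by
    intro n
    exact (Finset.measurable_sum _ fun i _ => hf.comp (hσ.measurable.iterate i)).div_const _
  have hbdd : ∀ ω, IsBoundedUnder (· ≤ ·) atTop (u ω) :=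
    fun ω => ⟨K, eventually_map.2 (Eventually.of_forall fun n => (abs_le.1 (hu_abs ω n)).2)⟩
  have hcob : ∀ ω, IsCoboundedUnder (· ≤ ·) atTop (u ω) :=
    fun ω => IsBoundedUnder.isCoboundedUnder_le
      ⟨-K, eventually_map.2 (Eventually.of_forall fun n => (abs_le.1 (hu_abs ω n)).1)⟩
  -- exact invariance of the limsup
  have hL_inv : ∀ ω, limsup (u (σ ω)) atTop = limsup (u ω) atTop := by
    intro ω
    refine limsup_eq_of_sub' (hu_abs (σ ω)) (hu_abs ω) ?_
    have hdiff : ∀ n : ℕ, u (σ ω) n - u ω n = (f (σ^[n + 1] ω) - f ω) / ((n:ℝ) + 1) := by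
      intro n
      have e1 : ∑ i ∈ Finset.range (n + 1), f (σ^[i] (σ ω))
          = ∑ i ∈ Finset.range (n + 1), f (σ^[i] ω) + f (σ^[n + 1] ω) - f ω := by
        have e2 : ∑ i ∈ Finset.range (n + 2), f (σ^[i] ω)
            = (∑ i ∈ Finset.range (n + 1), f (σ^[i + 1] ω)) + f (σ^[0] ω) :=
          Finset.sum_range_succ' _ _
        have e3 : ∑ i ∈ Finset.range (n + 2), f (σ^[i] ω)
            = ∑ i ∈ Finset.range (n + 1), f (σ^[i] ω) + f (σ^[n + 1] ω) :=
          Finset.sum_range_succ _ _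
        have e4 : ∀ i : ℕ, f (σ^[i] (σ ω)) = f (σ^[i + 1] ω) := by
          intro i; rw [← Function.iterate_succ_apply]
        simp only [e4]
        simp only [Function.iterate_zero_apply] at e2
        linarith
      simp only [hudef, e1]
      ring
    have hb : ∀ n : ℕ, ‖u (σ ω) n - u ω n‖ ≤ 2 * K / ((n:ℝ) + 1) := by
      intro n
      rw [hdiff n, Real.norm_eq_abs, abs_div, abs_of_pos (by positivity : (0:ℝ) < (n:ℝ) + 1)]
      have habs : |f (σ^[n + 1] ω) - f ω| ≤ 2 * K := by
        have h1 := hK (σ^[n + 1] ω)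
        have h2 := hK ω
        have h3 : |f (σ^[n + 1] ω) - f ω| ≤ |f (σ^[n + 1] ω)| + |f ω| := by
          rw [sub_eq_add_neg]
          exact (abs_add_le _ _).trans_eq (by rw [abs_neg])
        linarith
      gcongr
    have h0 : Tendsto (fun n : ℕ => 2 * K / ((n : ℝ) + 1)) atTop (nhds 0) := by
      have h1 := (tendsto_add_atTop_iff_nat 1).2 (tendsto_const_div_atTop_nhds_zero_nat (2 * K))
      refine h1.congr fun n => ?_
      push_cast; ring
    exact squeeze_zero_norm hb h0
  -- main δ-step
  have key : ∀ δ : ℝ, 0 < δ → ∀ᵐ ω ∂μ, limsup (u ω) atTop ≤ A + δ := by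
    intro δ hδ
    set c : ℝ := A + δ with hc
    set B : Set Ω := ⋃ (q : ℚ), ⋃ (_ : c < (q : ℝ)),
        ⋂ (m : ℕ), ⋃ (n : ℕ), ⋃ (_ : m ≤ n), {ω | (q : ℝ) ≤ u ω n} with hBdef
    have hB_meas : MeasurableSet B := by
      refine MeasurableSet.iUnion fun q => MeasurableSet.iUnion fun _ =>
        MeasurableSet.iInter fun m => MeasurableSet.iUnion fun n =>
        MeasurableSet.iUnion fun _ => ?_
      exact measurableSet_le measurable_const (hu_meas n)
    have hB_mem : ∀ ω, ω ∈ B ↔ c < limsup (u ω) atTop := by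
      intro ω
      simp only [hBdef, Set.mem_iUnion, Set.mem_iInter, Set.mem_setOf_eq, exists_prop]
      constructor
      · rintro ⟨q, hq, hfreq⟩
        have hf' : ∃ᶠ n in atTop, (q : ℝ) ≤ u ω n := by
          rw [frequently_atTop]
          intro m
          obtain ⟨n, hn1, hn2⟩ := hfreq m
          exact ⟨n, hn1, hn2⟩
        exact lt_of_lt_of_le hq (le_limsup_of_frequently_le hf' (hbdd ω))
      · intro hlt
        obtain ⟨q, hq1, hq2⟩ := exists_rat_btwn hlt
        refine ⟨q, hq1, fun m => ?_⟩
        have hfreq : ∃ᶠ n in atTop, (q : ℝ) ≤ u ω n := by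
          by_contra hcon
          rw [not_frequently] at hcon
          have : limsup (u ω) atTop ≤ q :=
            limsup_le_of_le (hcob ω) (hcon.mono fun n hn => (not_le.1 hn).le)
          exact absurd hq2 (not_lt.2 this)
        obtain ⟨n, hn1, hn2⟩ := frequently_atTop.1 hfreq m
        exact ⟨n, hn1, hn2⟩
    have hB_inv : σ ⁻¹' B = B := by
      ext ω
      rw [Set.mem_preimage, hB_mem, hB_mem, hL_inv]
    rcases hσ.ae_empty_or_univ hB_meas hB_inv with hB0 | hB1
    · have : μ B = 0 := ae_eq_empty.mp hB0
      filter_upwards [measure_eq_zero_iff_ae_notMem.mp this] with ω hω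
      rw [hB_mem] at hω
      exact not_lt.1 hω
    · exfalso
      have hfint : Integrable f μ := by
        refine (integrable_const K).mono' hf.aestronglyMeasurable ?_
        exact Eventually.of_forall fun ω => by simpa [Real.norm_eq_abs] using hK ω
      have hiter : ∀ i : ℕ, (σ^[i]) ⁻¹' B = B := by
        intro i; induction i with
        | zero => simp
        | succ i ih =>
          rw [Function.iterate_succ', Set.preimage_comp, hB_inv, ih]
      set g : Ω → ℝ := B.indicator (fun ω => f ω - c) with hgdef
      have hg_meas : Measurable g := (hf.sub measurable_const).indicator hB_meas
      have hg_abs : ∀ ω, |g ω| ≤ K + |c| := by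
        intro ω
        rw [hgdef]
        by_cases hω : ω ∈ B
        · rw [Set.indicator_of_mem hω]
          have h3 : |f ω - c| ≤ |f ω| + |c| := by
            rw [sub_eq_add_neg]
            exact (abs_add_le _ _).trans_eq (by rw [abs_neg])
          have := hK ω
          linarith
        · rw [Set.indicator_of_notMem hω]
          simp only [abs_zero]
          positivity
      have hmax := maximal_ergodic hσ.toMeasurePreserving hg_meas
        (by positivity : (0:ℝ) ≤ K + |c|) hg_abs
      have hE : {ω | ∃ n : ℕ, 0 < ∑ i ∈ Finset.range (n + 1), g (σ^[i] ω)} = B := by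
        ext ω
        simp only [Set.mem_setOf_eq]
        constructor
        · rintro ⟨n, hn⟩
          by_contra hω
          have hz : ∀ i : ℕ, g (σ^[i] ω) = 0 := by
            intro i
            have hnm : σ^[i] ω ∉ B := by
              intro hmem
              have h5 : ω ∈ (σ^[i]) ⁻¹' B := Set.mem_preimage.2 hmem
              rw [hiter i] at h5
              exact hω h5
            exact Set.indicator_of_notMem hnm _
          rw [Finset.sum_congr rfl fun i _ => hz i] at hn
          simp at hn
        · intro hω
          have hmem : ∀ i : ℕ, σ^[i] ω ∈ B := by
            intro i
            have : ω ∈ (σ^[i]) ⁻¹' B := by rw [hiter i]; exact hω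
            exact this
          have hL : c < limsup (u ω) atTop := (hB_mem ω).1 hω
          have hex : ∃ n : ℕ, c < u ω n := by
            by_contra hcon
            push_neg at hcon
            have : limsup (u ω) atTop ≤ c :=
              limsup_le_of_le (hcob ω) (Eventually.of_forall hcon)
            exact absurd hL (not_lt.2 this)
          obtain ⟨n, hn⟩ := hex
          refine ⟨n, ?_⟩
          have hsum : ∑ i ∈ Finset.range (n + 1), g (σ^[i] ω)
              = (∑ i ∈ Finset.range (n + 1), f (σ^[i] ω)) - ((n:ℝ) + 1) * c := by
            have : ∀ i ∈ Finset.range (n + 1), g (σ^[i] ω) = f (σ^[i] ω) - c :=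
              fun i _ => Set.indicator_of_mem (hmem i) _
            rw [Finset.sum_congr rfl this, Finset.sum_sub_distrib, Finset.sum_const,
              Finset.card_range]
            push_cast; ring
          rw [hsum]
          have hpos : (0:ℝ) < (n:ℝ) + 1 := by positivity
          simp only [hudef] at hn
          rw [lt_div_iff₀ hpos] at hn
          linarith
      rw [hE] at hmax
      have h2 : ∫ ω in B, g ω ∂μ = ∫ ω in B, (f ω - c) ∂μ :=
        setIntegral_congr_fun hB_meas (fun ω hω => Set.indicator_of_mem hω _)
      have h3 : ∫ ω in B, (f ω - c) ∂μ = ∫ ω, (f ω - c) ∂μ := by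
        rw [setIntegral_congr_set hB1, setIntegral_univ]
      have h4 : ∫ ω, (f ω - c) ∂μ = A - c := by
        rw [integral_sub hfint (integrable_const c), integral_const]
        simp [hA]
      rw [h2, h3, h4, hc] at hmax
      linarith
  -- combine over δ = 1/(k+1)
  have hall : ∀ᵐ ω ∂μ, ∀ k : ℕ, limsup (u ω) atTop ≤ A + 1 / ((k:ℝ) + 1) :=
    ae_all_iff.2 fun k => key (1 / ((k:ℝ) + 1)) (by positivity)
  filter_upwards [hall] with ω hω
  refine le_of_forall_pos_le_add fun ε hε => ?_
  obtain ⟨k, hk⟩ := exists_nat_one_div_lt hε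
  exact (hω k).trans (by linarith)

/-- Pointwise Birkhoff ergodic theorem for bounded measurable functions. -/
private lemma birkhoff_tendsto [IsProbabilityMeasure μ] {σ : Ω → Ω} (hσ : Ergodic σ μ)
    {f : Ω → ℝ} (hf : Measurable f) {K : ℝ} (hK0 : 0 ≤ K) (hK : ∀ ω, |f ω| ≤ K) :
    ∀ᵐ ω ∂μ, Tendsto (fun n : ℕ => (∑ i ∈ Finset.range n, f (σ^[i] ω)) / n) atTop
      (nhds (∫ ω, f ω ∂μ)) := by
  have h1 := birkhoff_limsup_le hσ hf hK0 hK
  have h2 := birkhoff_limsup_le hσ hf.neg hK0 (fun ω => by simpa using hK ω)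
  have hIneg : ∫ ω, -f ω ∂μ = -∫ ω, f ω ∂μ := integral_neg f
  filter_upwards [h1, h2] with ω hω1 hω2
  set A := ∫ ω, f ω ∂μ with hA
  set u : ℕ → ℝ := fun n => (∑ i ∈ Finset.range (n + 1), f (σ^[i] ω)) / ((n:ℝ) + 1) with hudef
  have hu_abs : ∀ n : ℕ, |u n| ≤ K := by
    intro n
    have hpos : (0:ℝ) < (n:ℝ) + 1 := by positivity
    simp only [hudef]
    rw [abs_div, abs_of_pos hpos, div_le_iff₀ hpos]
    calc |∑ i ∈ Finset.range (n + 1), f (σ^[i] ω)|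
        ≤ ∑ i ∈ Finset.range (n + 1), |f (σ^[i] ω)| := Finset.abs_sum_le_sum_abs _ _
      _ ≤ ∑ i ∈ Finset.range (n + 1), K := Finset.sum_le_sum (fun i _ => hK _)
      _ = K * ((n:ℝ) + 1) := by rw [Finset.sum_const, Finset.card_range]; push_cast; ring
  have hω2' : limsup (fun n : ℕ => -(u n)) atTop ≤ -A := by
    have he : (fun n : ℕ => (∑ i ∈ Finset.range (n + 1), (fun x => -f x) (σ^[i] ω)) / ((n:ℝ) + 1))
        = fun n : ℕ => -(u n) := by
      funext n
      simp only [hudef]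
      rw [Finset.sum_neg_distrib, neg_div]
    replace hω2 : limsup (fun n : ℕ => (∑ i ∈ Finset.range (n + 1), (fun x => -f x) (σ^[i] ω)) / ((n:ℝ) + 1)) atTop ≤ ∫ ω, -f ω ∂μ := hω2
    rw [he, hIneg] at hω2
    exact hω2
  have hbddu : IsBoundedUnder (· ≤ ·) atTop u :=
    ⟨K, eventually_map.2 (Eventually.of_forall fun n => (abs_le.1 (hu_abs n)).2)⟩
  have hbddnu : IsBoundedUnder (· ≤ ·) atTop (fun n => -(u n)) :=
    ⟨K, eventually_map.2 (Eventually.of_forall fun n => by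
      have := (abs_le.1 (hu_abs n)).1; linarith)⟩
  have ht : Tendsto u atTop (nhds A) := by
    rw [Metric.tendsto_nhds]
    intro η hη
    have e1 : ∀ᶠ n in atTop, u n < A + η :=
      eventually_lt_of_limsup_lt (lt_of_le_of_lt hω1 (by linarith)) hbddu
    have e2 : ∀ᶠ n in atTop, -(u n) < -A + η :=
      eventually_lt_of_limsup_lt (lt_of_le_of_lt hω2' (by linarith)) hbddnu
    filter_upwards [e1, e2] with n hn1 hn2
    rw [Real.dist_eq, abs_lt]
    constructor <;> linarith
  have hshift : (fun n : ℕ => (∑ i ∈ Finset.range (n + 1), f (σ^[i] ω)) / ((n + 1 : ℕ) : ℝ))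
      = u := by
    funext n; simp only [hudef]; push_cast; ring_nf
  refine (tendsto_add_atTop_iff_nat 1).1 ?_
  show Tendsto (fun n : ℕ => (∑ i ∈ Finset.range (n + 1), f (σ^[i] ω)) / ((n + 1 : ℕ) : ℝ))
    atTop (nhds A)
  rw [hshift]
  exact ht

end Aux

set_option maxHeartbeats 1000000 in
/-- Birkhoff-type limit for the leading Lyapunov multipliers: if
`λ_ω^ε = 1 − ε β_ω + o(ε)` uniformly in ω, with β bounded and bounded below by
`β* > 0`, then for a.e. ω the product `∏_{i<t/ε} λ_{σ^i ω}^ε` converges to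
`exp(−t ∫ β dℙ)` as ε → 0 along ε = t/N, N ∈ ℕ. -/
theorem stmt2 {Ω : Type*} [MeasurableSpace Ω] (μ : Measure Ω) [IsProbabilityMeasure μ]
    (σ : Ω → Ω) (hσ : Ergodic σ μ)
    (β : Ω → ℝ) (hβm : Measurable β)
    (βstar C : ℝ) (hβstar : 0 < βstar)
    (hβlb : ∀ ω, βstar ≤ β ω) (hβub : ∀ ω, β ω ≤ C)
    (t : ℝ) (ht : 0 < t)
    (lam : ℝ → Ω → ℝ)
    (hlam_pos : ∀ ε ω, 0 < ε → 0 < lam ε ω)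
    (hlam_le : ∀ ε ω, 0 < ε → lam ε ω ≤ 1)
    (herr : ∀ δ : ℝ, 0 < δ → ∃ ε₀ > 0, ∀ ε : ℝ, 0 < ε → ε < ε₀ →
      ∀ ω, |lam ε ω - (1 - ε * β ω)| ≤ δ * ε) :
    ∀ᵐ ω ∂μ, Tendsto
      (fun N : ℕ => ∏ i ∈ Finset.range N, lam (t / N) (σ^[i] ω))
      atTop (nhds (Real.exp (-t * ∫ ω, β ω ∂μ))) := by
  set Cb := max C 1 with hCb
  have hCb0 : (0:ℝ) < Cb := lt_of_lt_of_le one_pos (le_max_right _ _)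
  have hβabs : ∀ ω, |β ω| ≤ Cb := by
    intro ω
    rw [abs_of_pos (lt_of_lt_of_le hβstar (hβlb ω))]
    exact (hβub ω).trans (le_max_left _ _)
  have hbirk := birkhoff_tendsto hσ hβm hCb0.le hβabs
  set A := ∫ ω, β ω ∂μ with hA
  filter_upwards [hbirk] with ω havg
  set S : ℕ → ℝ := fun N => ∑ i ∈ Finset.range N, β (σ^[i] ω) with hS
  set G : ℕ → ℝ := fun N => ∑ i ∈ Finset.range N, Real.log (lam (t / N) (σ^[i] ω)) with hG
  have hprod : ∀ᶠ N : ℕ in atTop,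
      Real.exp (G N) = ∏ i ∈ Finset.range N, lam (t / N) (σ^[i] ω) := by
    filter_upwards [eventually_ge_atTop 1] with N hN
    have hNpos : (0:ℝ) < N := by exact_mod_cast hN
    have htN : 0 < t / N := div_pos ht hNpos
    rw [hG, Real.exp_sum]
    exact Finset.prod_congr rfl fun i _ => Real.exp_log (hlam_pos _ _ htN)
  have hGlim : Tendsto G atTop (nhds (-t * A)) := by
    rw [Metric.tendsto_nhds]
    intro η hη
    set δ : ℝ := η / (4 * (t + 1)) with hδdef
    have hδ : 0 < δ := by positivity
    have hδt : δ * t < η / 4 := by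
      rw [hδdef, div_mul_eq_mul_div, div_lt_div_iff₀ (by positivity) (by norm_num)]
      nlinarith
    obtain ⟨ε₀, hε₀, herr'⟩ := herr δ hδ
    have htendN : Tendsto (fun N : ℕ => t / (N:ℝ)) atTop (nhds 0) :=
      tendsto_const_div_atTop_nhds_zero_nat t
    have hev2 : ∀ᶠ N : ℕ in atTop, t / (N:ℝ) < ε₀ := htendN.eventually (gt_mem_nhds hε₀)
    have hev3 : ∀ᶠ N : ℕ in atTop, (t / (N:ℝ)) * (Cb + δ) ≤ 1 / 2 := by
      have h30 : Tendsto (fun N : ℕ => (t / (N:ℝ)) * (Cb + δ)) atTop (nhds 0) := by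
        simpa using htendN.mul_const (Cb + δ)
      exact (h30.eventually (gt_mem_nhds (by norm_num : (0:ℝ) < 1/2))).mono
        fun N hN => hN.le
    have hev4 : ∀ᶠ N : ℕ in atTop, 2 * t^2 * (Cb + δ)^2 / (N:ℝ) < η / 4 :=
      (tendsto_const_div_atTop_nhds_zero_nat (2 * t^2 * (Cb + δ)^2)).eventually
        (gt_mem_nhds (by positivity))
    have hSlim : Tendsto (fun N : ℕ => t * (S N / (N:ℝ))) atTop (nhds (t * A)) :=
      havg.const_mul t
    have hev5 : ∀ᶠ N : ℕ in atTop, |t * (S N / (N:ℝ)) - t * A| < η / 4 := by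
      have := Metric.tendsto_nhds.1 hSlim (η / 4) (by positivity)
      simpa [Real.dist_eq] using this
    filter_upwards [eventually_ge_atTop 1, hev2, hev3, hev4, hev5] with N hN1 hN2 hN3 hN4 hN5
    have hNpos : (0:ℝ) < N := by exact_mod_cast hN1
    set ε : ℝ := t / N with hε
    have hεpos : 0 < ε := div_pos ht hNpos
    -- per-term estimate
    have hterm : ∀ i : ℕ, |Real.log (lam ε (σ^[i] ω)) + ε * β (σ^[i] ω)|
        ≤ δ * ε + 2 * (ε * (Cb + δ))^2 := by
      intro i
      set ω' := σ^[i] ω with hω'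
      set x : ℝ := 1 - lam ε ω' with hx
      have hlam1 : lam ε ω' = 1 - x := by rw [hx]; ring
      have hx0 : 0 ≤ x := by have := hlam_le ε ω' hεpos; rw [hx]; linarith
      have he := herr' ε hεpos hN2 ω'
      have hxβ : |x - ε * β ω'| ≤ δ * ε := by
        have heq : x - ε * β ω' = -(lam ε ω' - (1 - ε * β ω')) := by rw [hx]; ring
        rw [heq, abs_neg]
        exact he
      have hxup : x ≤ ε * (Cb + δ) := by
        have h6 := (abs_le.1 hxβ).2
        have h7 : β ω' ≤ Cb := (hβub ω').trans (le_max_left _ _)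
        nlinarith [hεpos.le]
      have hxhalf : |x| ≤ 1 / 2 := by
        rw [abs_of_nonneg hx0]; exact hxup.trans hN3
      have hlog := Real.abs_log_sub_add_sum_range_le
        (lt_of_le_of_lt hxhalf (by norm_num)) 1
      have hlog1 : |x + Real.log (1 - x)| ≤ |x|^2 / (1 - |x|) := by
        simpa [Finset.sum_range_one] using hlog
      have hlog2 : |x + Real.log (1 - x)| ≤ 2 * x^2 := by
        have hden : (1:ℝ)/2 ≤ 1 - |x| := by
          have := hxhalf; linarith [abs_nonneg x]
        have h9 : |x|^2 / (1 - |x|) ≤ |x|^2 / (1/2) :=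
          div_le_div_of_nonneg_left (sq_nonneg _) (by norm_num) hden
        have h9' : |x|^2 / (1/2) = 2 * x^2 := by rw [sq_abs]; ring
        exact hlog1.trans (h9.trans_eq h9')
      have hxsq : x^2 ≤ (ε * (Cb + δ))^2 := by
        have : 0 ≤ ε * (Cb + δ) := by positivity
        nlinarith
      calc |Real.log (lam ε ω') + ε * β ω'|
          = |(x + Real.log (1 - x)) + (ε * β ω' - x)| := by rw [hlam1]; ring_nf
        _ ≤ |x + Real.log (1 - x)| + |ε * β ω' - x| := abs_add_le _ _
        _ ≤ 2 * x^2 + δ * ε := by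
            have : |ε * β ω' - x| = |x - ε * β ω'| := abs_sub_comm _ _
            rw [this]
            exact add_le_add hlog2 hxβ
        _ ≤ δ * ε + 2 * (ε * (Cb + δ))^2 := by nlinarith
    -- sum the estimates
    have hGsum : |G N + ε * S N| ≤ (N:ℝ) * (δ * ε + 2 * (ε * (Cb + δ))^2) := by
      have heq : G N + ε * S N
          = ∑ i ∈ Finset.range N, (Real.log (lam ε (σ^[i] ω)) + ε * β (σ^[i] ω)) := by
        simp only [hG, hS]
        rw [← hε, Finset.mul_sum, ← Finset.sum_add_distrib]
      rw [heq]
      calc |∑ i ∈ Finset.range N, (Real.log (lam ε (σ^[i] ω)) + ε * β (σ^[i] ω))|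
          ≤ ∑ i ∈ Finset.range N, |Real.log (lam ε (σ^[i] ω)) + ε * β (σ^[i] ω)| :=
            Finset.abs_sum_le_sum_abs _ _
        _ ≤ ∑ i ∈ Finset.range N, (δ * ε + 2 * (ε * (Cb + δ))^2) :=
            Finset.sum_le_sum fun i _ => hterm i
        _ = (N:ℝ) * (δ * ε + 2 * (ε * (Cb + δ))^2) := by
            rw [Finset.sum_const, Finset.card_range, nsmul_eq_mul]
    have harith : (N:ℝ) * (δ * ε + 2 * (ε * (Cb + δ))^2)
        = δ * t + 2 * t^2 * (Cb + δ)^2 / (N:ℝ) := by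
      have hN0 : (N:ℝ) ≠ 0 := ne_of_gt hNpos
      rw [hε]
      field_simp
    have hεS : ε * S N = t * (S N / (N:ℝ)) := by rw [hε]; ring
    rw [Real.dist_eq]
    have hsplit : G N - (-t * A) = (G N + ε * S N) - (t * (S N / (N:ℝ)) - t * A) := by
      rw [hεS]; ring
    calc |G N - (-t * A)|
        ≤ |G N + ε * S N| + |t * (S N / (N:ℝ)) - t * A| := by
          rw [hsplit]; exact abs_sub _ _
      _ < (δ * t + 2 * t^2 * (Cb + δ)^2 / (N:ℝ)) + η / 4 := by
          rw [← harith]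
          have hδt' : δ * ε ≥ 0 := by positivity
          exact add_lt_add_of_le_of_lt hGsum hN5
      _ < η := by linarith [hδt, hN4]
  exact Tendsto.congr' hprod ((Real.continuous_exp.tendsto _).comp hGlim)
end

section
/- Let (Ω,ℱ,ℙ,σ) be ergodic measure-preserving with σ invertible, and let β₁, β₂ ∈ L^∞(ℙ) with β₁ω, β₂ω ≥ β* > 0. Fix t > 0. Then for ℙ-a.e. ω, lim_{ε→0} ∑_{n=0}^{t/ε − 1} (ε β₁(σⁿω) + o(ε)) ∏_{k=0}^{n−1} (1 − ε(β₁(σᵏω) + β₂(σᵏω)) + o(ε)) = (∫β₁ dℙ / ∫(β₁+β₂) dℙ) · (1 − exp(−t ∫(β₁+β₂) dℙ)), where all o(ε) errors are uniform in ω. -/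
open MeasureTheory Filter

set_option linter.unusedSectionVars false
set_option linter.unusedVariables false
set_option maxHeartbeats 1000000

section Auxiliary
open Finset

variable {Ω : Type*} [MeasurableSpace Ω] {μ : Measure Ω} [IsProbabilityMeasure μ]
  {σ : Ω → Ω} {f : Ω → ℝ}




variable {Ω : Type*} [MeasurableSpace Ω] {μ : Measure Ω} [IsProbabilityMeasure μ]
  {σ : Ω → Ω} {f : Ω → ℝ}

lemma abs_birkhoffSum_le (σ : Ω → Ω) {f : Ω → ℝ} {C : ℝ}
    (hC : ∀ ω, |f ω| ≤ C) (n : ℕ) (ω : Ω) : |birkhoffSum σ f n ω| ≤ n * C := by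
  calc |birkhoffSum σ f n ω| ≤ ∑ k ∈ range n, |f (σ^[k] ω)| :=
        Finset.abs_sum_le_sum_abs _ _
    _ ≤ ∑ _k ∈ range n, C := Finset.sum_le_sum fun k _ => hC _
    _ = n * C := by simp [mul_comm]

noncomputable def phiMax (σ : Ω → Ω) (f : Ω → ℝ) : ℕ → Ω → ℝ
  | 0 => fun _ => 0
  | n + 1 => fun ω => max 0 (f ω + phiMax σ f n (σ ω))

lemma phiMax_nonneg (σ : Ω → Ω) (f : Ω → ℝ) : ∀ n ω, 0 ≤ phiMax σ f n ω
  | 0, ω => le_refl 0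
  | n + 1, ω => le_max_left _ _

lemma phiMax_mono (σ : Ω → Ω) (f : Ω → ℝ) : ∀ n ω, phiMax σ f n ω ≤ phiMax σ f (n + 1) ω := by
  intro n
  induction n with
  | zero => intro ω; exact phiMax_nonneg σ f 1 ω
  | succ n ih =>
    intro ω
    show max 0 _ ≤ max 0 _
    exact max_le_max le_rfl (add_le_add_right (ih (σ ω)) _)

lemma phiMax_measurable (hσ : Measurable σ) (hf : Measurable f) :
    ∀ n, Measurable (phiMax σ f n)
  | 0 => measurable_const
  | n + 1 =>
    measurable_const.max (hf.add ((phiMax_measurable hσ hf n).comp hσ))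

lemma phiMax_abs_le {σ : Ω → Ω} {f : Ω → ℝ} {C : ℝ} (hC : ∀ ω, |f ω| ≤ C) (hC0 : 0 ≤ C) :
    ∀ n ω, |phiMax σ f n ω| ≤ n * C := by
  intro n
  induction n with
  | zero => intro ω; simp [phiMax]
  | succ n ih =>
    intro ω
    rw [abs_of_nonneg (phiMax_nonneg σ f _ ω)]
    have h1 : f ω + phiMax σ f n (σ ω) ≤ C + n * C := by
      have := (abs_le.1 (hC ω)).2
      have h2 := (abs_le.1 (ih (σ ω))).2
      linarith
    have : (0 : ℝ) ≤ (n + 1 : ℕ) * C := by positivity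
    refine max_le this ?_
    push_cast
    linarith

lemma birkhoffSum_le_phiMax (σ : Ω → Ω) (f : Ω → ℝ) :
    ∀ n, ∀ k ≤ n, ∀ ω, birkhoffSum σ f k ω ≤ phiMax σ f n ω := by
  intro n
  induction n with
  | zero =>
    intro k hk ω
    interval_cases k
    simp [birkhoffSum, phiMax]
  | succ n ih =>
    intro k hk ω
    match k with
    | 0 => simpa [birkhoffSum_zero] using phiMax_nonneg σ f (n + 1) ω
    | j + 1 =>
      rw [birkhoffSum_succ']
      calc f ω + birkhoffSum σ f j (σ ω) ≤ f ω + phiMax σ f n (σ ω) :=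
            add_le_add_right (ih j (by omega) (σ ω)) _
        _ ≤ max 0 (f ω + phiMax σ f n (σ ω)) := le_max_right _ _

lemma integrable_of_abs_le {g : Ω → ℝ} (hg : Measurable g) {K : ℝ} (hK : ∀ ω, |g ω| ≤ K) :
    Integrable g μ :=
  ⟨hg.aestronglyMeasurable, HasFiniteIntegral.of_bounded (C := K)
    (Eventually.of_forall fun ω => by simpa [Real.norm_eq_abs] using hK ω)⟩

lemma maximal_aux (hσ : MeasurePreserving σ μ μ) (hf : Measurable f) {C : ℝ}
    (hC : ∀ ω, |f ω| ≤ C) (n : ℕ) :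
    0 ≤ ∫ ω in {ω | 0 < phiMax σ f (n + 1) ω}, f ω ∂μ := by
  set C' := max C 0 with hC'
  have hC0' : 0 ≤ C' := le_max_right _ _
  have hC'' : ∀ ω, |f ω| ≤ C' := fun ω => (hC ω).trans (le_max_left _ _)
  have hΦm : ∀ m, Measurable (phiMax σ f m) := phiMax_measurable hσ.measurable hf
  set E := {ω | 0 < phiMax σ f (n + 1) ω} with hEdef
  have hEm : MeasurableSet E := measurableSet_lt measurable_const (hΦm (n + 1))
  have hfi : Integrable f μ := integrable_of_abs_le hf hC''
  have hΦi : ∀ m, Integrable (phiMax σ f m) μ := fun m =>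
    integrable_of_abs_le (hΦm m) (phiMax_abs_le hC'' hC0' m)
  have hΦσi : ∀ m, Integrable (fun ω => phiMax σ f m (σ ω)) μ := fun m =>
    integrable_of_abs_le ((hΦm m).comp hσ.measurable) (fun ω => phiMax_abs_le hC'' hC0' m (σ ω))
  have key : ∀ ω ∈ E, f ω = phiMax σ f (n + 1) ω - phiMax σ f n (σ ω) := by
    intro ω hω
    have hpos : 0 < f ω + phiMax σ f n (σ ω) := by
      by_contra h
      push_neg at h
      have : phiMax σ f (n + 1) ω = 0 := by
        show max 0 _ = 0
        exact max_eq_left h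
      rw [hEdef] at hω
      simp only [Set.mem_setOf_eq, this] at hω
      exact lt_irrefl 0 hω
    have : phiMax σ f (n + 1) ω = f ω + phiMax σ f n (σ ω) := max_eq_right hpos.le
    linarith
  have h1 : ∫ ω in E, f ω ∂μ
      = ∫ ω in E, (phiMax σ f (n + 1) ω - phiMax σ f n (σ ω)) ∂μ :=
    setIntegral_congr_fun hEm key
  have h2 : ∫ ω in E, (phiMax σ f (n + 1) ω - phiMax σ f n (σ ω)) ∂μ
      = (∫ ω in E, phiMax σ f (n + 1) ω ∂μ) - ∫ ω in E, phiMax σ f n (σ ω) ∂μ :=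
    integral_sub ((hΦi (n + 1)).integrableOn) ((hΦσi n).integrableOn)
  have h3 : ∫ ω in E, phiMax σ f (n + 1) ω ∂μ = ∫ ω, phiMax σ f (n + 1) ω ∂μ := by
    have hcompl : ∫ ω in Eᶜ, phiMax σ f (n + 1) ω ∂μ = 0 := by
      have : ∀ ω ∈ Eᶜ, phiMax σ f (n + 1) ω = (fun _ => (0:ℝ)) ω := by
        intro ω hω
        exact le_antisymm (not_lt.1 hω) (phiMax_nonneg σ f _ ω)
      rw [setIntegral_congr_fun hEm.compl this]
      simp
    rw [← integral_add_compl hEm (hΦi (n + 1)), hcompl, add_zero]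
  have h4 : ∫ ω in E, phiMax σ f n (σ ω) ∂μ ≤ ∫ ω, phiMax σ f n (σ ω) ∂μ :=
    setIntegral_le_integral (hΦσi n) (Eventually.of_forall fun ω => phiMax_nonneg σ f n (σ ω))
  have h5 : ∫ ω, phiMax σ f n (σ ω) ∂μ = ∫ ω, phiMax σ f n ω ∂μ := by
    conv_rhs => rw [← hσ.map_eq]
    exact (integral_map hσ.measurable.aemeasurable
      ((hΦm n).aestronglyMeasurable)).symm
  have h6 : ∫ ω, phiMax σ f n ω ∂μ ≤ ∫ ω, phiMax σ f (n + 1) ω ∂μ :=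
    integral_mono (hΦi n) (hΦi (n + 1)) (fun ω => phiMax_mono σ f n ω)
  rw [h1, h2, h3]
  linarith

lemma integral_nonneg_of_ae_exists_pos (hσ : MeasurePreserving σ μ μ) (hf : Measurable f)
    {C : ℝ} (hC : ∀ ω, |f ω| ≤ C)
    (hae : ∀ᵐ ω ∂μ, ∃ n, 0 < phiMax σ f n ω) : 0 ≤ ∫ ω, f ω ∂μ := by
  set s : ℕ → Set Ω := fun n => {ω | 0 < phiMax σ f (n + 1) ω} with hs
  have hΦm : ∀ m, Measurable (phiMax σ f m) := phiMax_measurable hσ.measurable hf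
  have hsm : ∀ n, MeasurableSet (s n) := fun n =>
    measurableSet_lt measurable_const (hΦm (n + 1))
  have hmono : Monotone s := monotone_nat_of_le_succ fun n ω hω =>
    lt_of_lt_of_le hω (phiMax_mono σ f (n + 1) ω)
  have hC'' : ∀ ω, |f ω| ≤ max C 0 := fun ω => (hC ω).trans (le_max_left _ _)
  have hfi : Integrable f μ := integrable_of_abs_le hf hC''
  have htend := tendsto_setIntegral_of_monotone hsm hmono hfi.integrableOn
  have huniv : (⋃ n, s n) =ᵐ[μ] (Set.univ : Set Ω) := by
    rw [Filter.eventuallyEq_set]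
    filter_upwards [hae] with ω hω
    simp only [Set.mem_univ, iff_true, Set.mem_iUnion]
    obtain ⟨n, hn⟩ := hω
    match n with
    | 0 => simp [phiMax] at hn
    | m + 1 => exact ⟨m, hn⟩
  have heq : ∫ ω in ⋃ n, s n, f ω ∂μ = ∫ ω, f ω ∂μ := by
    rw [setIntegral_congr_set huniv, setIntegral_univ]
  rw [← heq]
  exact ge_of_tendsto htend (Eventually.of_forall fun n => maximal_aux hσ hf hC n)



lemma abs_birkhoffAvg_le {σ : Ω → Ω} {f : Ω → ℝ} {C : ℝ} (hC0 : 0 ≤ C)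
    (hC : ∀ ω, |f ω| ≤ C) (n : ℕ) (ω : Ω) : |birkhoffSum σ f n ω / n| ≤ C := by
  rcases Nat.eq_zero_or_pos n with hn | hn
  · subst hn; simp [birkhoffSum, hC0]
  · have hn' : (0:ℝ) < n := by exact_mod_cast hn
    rw [abs_div, abs_of_pos hn', div_le_iff₀ hn']
    exact (abs_birkhoffSum_le σ hC n ω).trans (by ring_nf; exact le_rfl)

lemma birkhoffSum_sub_const (σ : Ω → Ω) (f : Ω → ℝ) (a : ℝ) (n : ℕ) (ω : Ω) :
    birkhoffSum σ (fun x => f x - a) n ω = birkhoffSum σ f n ω - n * a := by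
  simp [birkhoffSum, Finset.sum_sub_distrib, mul_comm]

lemma measurable_birkhoffAvg (hσ : Measurable σ) (hf : Measurable f) (n : ℕ) :
    Measurable (fun ω => birkhoffSum σ f n ω / n) := by
  apply Measurable.div_const
  exact Finset.measurable_sum _ fun k _ => hf.comp (hσ.iterate k)

lemma limsup_birkhoff_le (hσ : Ergodic σ μ) (hf : Measurable f) {C : ℝ} (hC0 : 0 ≤ C)
    (hC : ∀ ω, |f ω| ≤ C) :
    ∀ᵐ ω ∂μ, limsup (fun n => birkhoffSum σ f n ω / n) atTop ≤ ∫ ω, f ω ∂μ := by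
  set A : ℕ → Ω → ℝ := fun n ω => birkhoffSum σ f n ω / n with hA
  have hAbd : ∀ n ω, |A n ω| ≤ C := fun n ω => abs_birkhoffAvg_le hC0 hC n ω
  have hbddle : ∀ ω, IsBoundedUnder (· ≤ ·) atTop (fun n => A n ω) := fun ω =>
    isBoundedUnder_of ⟨C, fun n => (abs_le.1 (hAbd n ω)).2⟩
  have hbddge : ∀ ω, IsBoundedUnder (· ≥ ·) atTop (fun n => A n ω) := fun ω =>
    isBoundedUnder_of ⟨-C, fun n => (abs_le.1 (hAbd n ω)).1⟩
  have hcobdd : ∀ ω, IsCoboundedUnder (· ≤ ·) atTop (fun n => A n ω) := fun ω =>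
    (hbddge ω).isCoboundedUnder_le
  set L : Ω → ℝ := fun ω => limsup (fun n => A n ω) atTop with hL
  have hLm : Measurable L := Measurable.limsup fun n =>
    measurable_birkhoffAvg hσ.toMeasurePreserving.measurable hf n
  have hfi : Integrable f μ := integrable_of_abs_le hf hC
  have hdiff : ∀ ω, Tendsto (fun n => A n (σ ω) - A n ω) atTop (nhds 0) := by
    intro ω
    apply squeeze_zero_norm' (a := fun n : ℕ => 2 * C / n)
    · filter_upwards [eventually_ge_atTop 1] with n hn
      have hn' : (0:ℝ) < n := by exact_mod_cast hn
      have : A n (σ ω) - A n ω = (f (σ^[n] ω) - f ω) / n := by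
        rw [hA]; simp only
        rw [div_sub_div_same, birkhoffSum_apply_sub_birkhoffSum]
      rw [this, Real.norm_eq_abs, abs_div, abs_of_pos hn']
      gcongr
      calc |f (σ^[n] ω) - f ω| ≤ |f (σ^[n] ω)| + |f ω| := abs_sub _ _
        _ ≤ 2 * C := by linarith [hC (σ^[n] ω), hC ω]
    · exact tendsto_const_div_atTop_nhds_zero_nat (2 * C)
  have hinvle : ∀ ω₁ ω₂ : Ω, Tendsto (fun n => A n ω₁ - A n ω₂) atTop (nhds 0) →
      L ω₁ ≤ L ω₂ := by
    intro ω₁ ω₂ hten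
    refine le_of_forall_pos_le_add fun δ hδ => ?_
    have hev : ∀ᶠ n in atTop, A n ω₁ ≤ A n ω₂ + δ := by
      filter_upwards [hten.eventually (eventually_abs_sub_lt (0:ℝ) hδ)] with n hn
      rw [sub_zero] at hn
      linarith [(abs_lt.1 hn).2]
    calc L ω₁ ≤ limsup (fun n => A n ω₂ + δ) atTop :=
          limsup_le_limsup hev (hcobdd ω₁)
            (isBoundedUnder_of ⟨C + δ, fun n => by linarith [(abs_le.1 (hAbd n ω₂)).2]⟩)
      _ = L ω₂ + δ := limsup_add_const atTop (fun n => A n ω₂) δ (hbddle ω₂) (hcobdd ω₂)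
  have hinv : ∀ ω, L (σ ω) = L ω := by
    intro ω
    have h2 : Tendsto (fun n => A n ω - A n (σ ω)) atTop (nhds 0) := by
      have := (hdiff ω).neg
      simpa using this
    exact le_antisymm (hinvle (σ ω) ω (hdiff ω)) (hinvle ω (σ ω) h2)
  obtain ⟨c, hc⟩ := hσ.ae_eq_const_of_ae_eq_comp_ae (g := L) hLm.aestronglyMeasurable
    (Eventually.of_forall fun ω => hinv ω)
  have hcle : c ≤ ∫ ω, f ω ∂μ := by
    refine le_of_forall_pos_le_add fun δ hδ => ?_
    set g : Ω → ℝ := fun ω => f ω - (c - δ) with hg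
    have hgm : Measurable g := hf.sub measurable_const
    have hgb : ∀ ω, |g ω| ≤ C + |c - δ| := fun ω =>
      (abs_sub _ _).trans (add_le_add_left (hC ω) _)
    have hae : ∀ᵐ ω ∂μ, ∃ n, 0 < phiMax σ g n ω := by
      filter_upwards [hc] with ω hω
      by_contra h
      push_neg at h
      have hA_le : ∀ n : ℕ, 1 ≤ n → A n ω ≤ c - δ := by
        intro n hn
        have h1 : birkhoffSum σ g n ω ≤ 0 :=
          (birkhoffSum_le_phiMax σ g n n le_rfl ω).trans (h n)
        rw [birkhoffSum_sub_const] at h1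
        have hn' : (0:ℝ) < n := by exact_mod_cast hn
        rw [hA]; simp only
        rw [div_le_iff₀ hn']
        linarith
      have hLle : L ω ≤ c - δ :=
        limsup_le_of_le (hcobdd ω)
          (by filter_upwards [eventually_ge_atTop 1] with n hn; exact hA_le n hn)
      rw [hω] at hLle
      simp only [Function.const_apply] at hLle
      linarith
    have h0 := integral_nonneg_of_ae_exists_pos hσ.toMeasurePreserving hgm hgb hae
    have hgi : ∫ ω, g ω ∂μ = (∫ ω, f ω ∂μ) - (c - δ) := by
      rw [hg]
      rw [integral_sub hfi (integrable_const _), integral_const]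
      simp
    rw [hgi] at h0
    linarith
  filter_upwards [hc] with ω hω
  calc limsup (fun n => birkhoffSum σ f n ω / n) atTop = L ω := rfl
    _ = c := hω
    _ ≤ _ := hcle

theorem birkhoff_ae_tendsto (hσ : Ergodic σ μ) (hf : Measurable f) {C : ℝ} (hC0 : 0 ≤ C)
    (hC : ∀ ω, |f ω| ≤ C) :
    ∀ᵐ ω ∂μ, Tendsto (fun n => birkhoffSum σ f n ω / n) atTop (nhds (∫ ω, f ω ∂μ)) := by
  have hCneg : ∀ ω, |(fun x => -f x) ω| ≤ C := fun ω => by simpa using hC ω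
  have h1 := limsup_birkhoff_le hσ hf hC0 hC
  have h2 := limsup_birkhoff_le (f := fun x => -f x) hσ hf.neg hC0 hCneg
  have hIneg : ∫ ω, -f ω ∂μ = -∫ ω, f ω ∂μ := integral_neg f
  filter_upwards [h1, h2] with ω hω1 hω2
  rw [hIneg] at hω2
  have hω2' : limsup (fun n => -(birkhoffSum σ f n ω / n)) atTop ≤ -∫ ω, f ω ∂μ := by
    refine le_trans (le_of_eq ?_) hω2
    congr 1
    funext n
    rw [show birkhoffSum σ (fun x => -f x) n ω = -birkhoffSum σ f n ω by
      simp [birkhoffSum]]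
    ring
  rw [Metric.tendsto_atTop]
  intro ε hε
  have hb1 : IsBoundedUnder (· ≤ ·) atTop (fun n => birkhoffSum σ f n ω / n) :=
    isBoundedUnder_of ⟨C, fun n => (abs_le.1 (abs_birkhoffAvg_le hC0 hC n ω)).2⟩
  have hb2 : IsBoundedUnder (· ≤ ·) atTop (fun n => -(birkhoffSum σ f n ω / n)) :=
    isBoundedUnder_of ⟨C, fun n => by
      have := (abs_le.1 (abs_birkhoffAvg_le (σ := σ) hC0 hC n ω)).1; linarith⟩
  have e1 : ∀ᶠ n in atTop, birkhoffSum σ f n ω / n < (∫ ω, f ω ∂μ) + ε :=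
    eventually_lt_of_limsup_lt (by linarith) hb1
  have e2 : ∀ᶠ n in atTop, -(birkhoffSum σ f n ω / n) < -(∫ ω, f ω ∂μ) + ε :=
    eventually_lt_of_limsup_lt (by linarith) hb2
  obtain ⟨N, hN⟩ := eventually_atTop.1 (e1.and e2)
  refine ⟨N, fun n hn => ?_⟩
  obtain ⟨hn1, hn2⟩ := hN n hn
  rw [Real.dist_eq, abs_sub_lt_iff]
  constructor <;> linarith



end Auxiliary

section Det
open Finset


lemma tendsto_N_mul_err (t : ℝ) (ht : 0 < t) (e : ℝ → ℝ)
    (he : ∀ δ : ℝ, 0 < δ → ∃ ε₀ > 0, ∀ ε : ℝ, 0 < ε → ε < ε₀ → |e ε| ≤ δ * ε) :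
    Tendsto (fun N : ℕ => (N : ℝ) * e (t / N)) atTop (nhds 0) := by
  rw [NormedAddCommGroup.tendsto_nhds_zero]
  intro δ hδ
  obtain ⟨ε₀, hε₀, hctrl⟩ := he (δ / (2 * t)) (by positivity)
  have h1 : Tendsto (fun N : ℕ => t / N) atTop (nhds 0) := tendsto_const_div_atTop_nhds_zero_nat t
  filter_upwards [eventually_ge_atTop 1, h1.eventually (eventually_lt_nhds hε₀)] with N hN1 hN2
  have hNpos : (0:ℝ) < N := by exact_mod_cast hN1
  have htN : 0 < t / N := by positivity
  have hb := hctrl (t / N) htN hN2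
  rw [Real.norm_eq_abs, abs_mul, abs_of_nonneg hNpos.le]
  calc (N:ℝ) * |e (t / N)| ≤ (N:ℝ) * (δ / (2 * t) * (t / N)) := by gcongr
    _ = δ / 2 := by field_simp
    _ < δ := by linarith

lemma log_one_sub_bound {x : ℝ} (h0 : 0 ≤ x) (h2 : x ≤ 1 / 2) :
    |Real.log (1 - x) + x| ≤ 2 * x ^ 2 := by
  have hx1 : 0 < 1 - x := by linarith
  have hup : Real.log (1 - x) ≤ -x := by
    have := Real.log_le_sub_one_of_pos hx1
    linarith
  have hlow : -x - 2 * x ^ 2 ≤ Real.log (1 - x) := by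
    rw [Real.le_log_iff_exp_le hx1]
    have hexp : 1 + (x + 2 * x ^ 2) ≤ Real.exp (x + 2 * x ^ 2) := by
      linarith [Real.add_one_le_exp (x + 2 * x ^ 2)]
    have hez : (0:ℝ) < Real.exp (x + 2 * x ^ 2) := Real.exp_pos _
    have key : 1 ≤ (1 - x) * Real.exp (x + 2 * x ^ 2) := by nlinarith [sq_nonneg x]
    rw [show -x - 2 * x ^ 2 = -(x + 2 * x ^ 2) by ring, Real.exp_neg, ← one_div,
      div_le_iff₀ hez]
    linarith
  rw [abs_le]
  constructor <;> nlinarith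

lemma det_tendsto (t βstar C I₁ I : ℝ) (ht : 0 < t) (hβstar : 0 < βstar)
    (b₁ b₂ : ℕ → ℝ)
    (hb₁lb : ∀ n, βstar ≤ b₁ n) (hb₂lb : ∀ n, βstar ≤ b₂ n)
    (hb₁ub : ∀ n, b₁ n ≤ C) (hb₂ub : ∀ n, b₂ n ≤ C)
    (hI₁ : Tendsto (fun n : ℕ => (∑ k ∈ range n, b₁ k) / n) atTop (nhds I₁))
    (hI : Tendsto (fun n : ℕ => (∑ k ∈ range n, (b₁ k + b₂ k)) / n) atTop (nhds I))
    (e₁ e₂ : ℝ → ℝ)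
    (he : ∀ δ : ℝ, 0 < δ → ∃ ε₀ > 0, ∀ ε : ℝ, 0 < ε → ε < ε₀ →
      |e₁ ε| ≤ δ * ε ∧ |e₂ ε| ≤ δ * ε) :
    Tendsto (fun N : ℕ => ∑ n ∈ range N,
        ((t / N) * b₁ n + e₁ (t / N)) *
          ∏ k ∈ range n, (1 - (t / N) * (b₁ k + b₂ k) + e₂ (t / N)))
      atTop (nhds ((I₁ / I) * (1 - Real.exp (-t * I)))) := by
  have hC0 : 0 < C := lt_of_lt_of_le hβstar (le_trans (hb₁lb 0) (hb₁ub 0))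
  set B : ℕ → ℝ := fun n => b₁ n + b₂ n with hBdef
  have hBlb : ∀ n, 2 * βstar ≤ B n := fun n => by
    have := hb₁lb n; have := hb₂lb n; simp only [hBdef]; linarith
  have hBub : ∀ n, B n ≤ 2 * C := fun n => by
    have := hb₁ub n; have := hb₂ub n; simp only [hBdef]; linarith
  -- bounds on I₁, I
  have havg : ∀ (b : ℕ → ℝ) (lo hi : ℝ), (∀ n, lo ≤ b n) → (∀ n, b n ≤ hi) →
      ∀ n : ℕ, 1 ≤ n → lo ≤ (∑ k ∈ range n, b k) / n ∧ (∑ k ∈ range n, b k) / n ≤ hi := by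
    intro b lo hi hlo hhi n hn
    have hn' : (0:ℝ) < n := by exact_mod_cast hn
    constructor
    · rw [le_div_iff₀ hn']
      calc lo * n = ∑ _k ∈ range n, lo := by rw [Finset.sum_const, card_range]; ring
        _ ≤ ∑ k ∈ range n, b k := Finset.sum_le_sum fun k _ => hlo k
    · rw [div_le_iff₀ hn']
      calc ∑ k ∈ range n, b k ≤ ∑ _k ∈ range n, hi := Finset.sum_le_sum fun k _ => hhi k
        _ = hi * n := by rw [Finset.sum_const, card_range]; ring
  have hI₁lb : βstar ≤ I₁ := ge_of_tendsto hI₁ (by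
    filter_upwards [eventually_ge_atTop 1] with n hn
    exact (havg b₁ βstar C hb₁lb hb₁ub n hn).1)
  have hI₁ub : I₁ ≤ C := le_of_tendsto hI₁ (by
    filter_upwards [eventually_ge_atTop 1] with n hn
    exact (havg b₁ βstar C hb₁lb hb₁ub n hn).2)
  have hIlb : 2 * βstar ≤ I := ge_of_tendsto hI (by
    filter_upwards [eventually_ge_atTop 1] with n hn
    exact (havg B (2*βstar) (2*C) hBlb hBub n hn).1)
  have hIub : I ≤ 2 * C := le_of_tendsto hI (by
    filter_upwards [eventually_ge_atTop 1] with n hn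
    exact (havg B (2*βstar) (2*C) hBlb hBub n hn).2)
  have hIpos : 0 < I := lt_of_lt_of_le (by positivity) hIlb
  -- the products
  set P : ℕ → ℕ → ℝ := fun N n => ∏ k ∈ range n, (1 - (t / N) * B k + e₂ (t / N)) with hPdef
  have hP0 : ∀ N, P N 0 = 1 := fun N => by simp [hPdef]
  have hPsucc : ∀ N n, P N (n + 1) = P N n * (1 - (t / N) * B n + e₂ (t / N)) := fun N n =>
    Finset.prod_range_succ _ n
  -- the Good regime
  obtain ⟨εg, hεg, hctrlg⟩ := he βstar hβstar
  set Good : ℕ → Prop := fun N => 1 ≤ N ∧ t / N < εg ∧ (t / N) * (2 * C + βstar) ≤ 1 / 2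
    with hGooddef
  have htn : Tendsto (fun N : ℕ => t / N) atTop (nhds 0) := tendsto_const_div_atTop_nhds_zero_nat t
  have hGood : ∀ᶠ N in atTop, Good N := by
    have h2 : (0:ℝ) < (1/2) / (2 * C + βstar) := by positivity
    filter_upwards [eventually_ge_atTop 1, htn.eventually (eventually_lt_nhds hεg),
      htn.eventually (eventually_le_nhds h2)] with N h1' h2' h3'
    refine ⟨h1', h2', ?_⟩
    rw [← le_div_iff₀ (by positivity)]
    exact h3'
  -- basic factor facts under Good
  have hfact : ∀ N, Good N → ∀ k,
      (1 / 2 : ℝ) ≤ 1 - (t / N) * B k + e₂ (t / N) ∧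
        1 - (t / N) * B k + e₂ (t / N) ≤ 1 := by
    intro N hN k
    obtain ⟨hN1, hN2, hN3⟩ := hN
    have hNpos : (0:ℝ) < N := by exact_mod_cast hN1
    have htN : 0 < t / N := by positivity
    have he₂ := (hctrlg (t / N) htN hN2).2
    have habs := abs_le.1 he₂
    have hBk1 := hBlb k
    have hBk2 := hBub k
    have h1 : (t / N) * B k ≤ (t / N) * (2 * C) := mul_le_mul_of_nonneg_left hBk2 htN.le
    have h2 : (t / N) * (2 * βstar) ≤ (t / N) * B k := mul_le_mul_of_nonneg_left hBk1 htN.le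
    have h3 : (0:ℝ) ≤ βstar * (t / N) := by positivity
    constructor
    · nlinarith [habs.1, hN3, h1]
    · nlinarith [habs.2, h2, h3]
  have hPpos : ∀ N, Good N → ∀ n, 0 < P N n := by
    intro N hN n
    apply Finset.prod_pos
    intro k _
    linarith [(hfact N hN k).1]
  have hPle1 : ∀ N, Good N → ∀ n, P N n ≤ 1 := by
    intro N hN n
    apply Finset.prod_le_one
    · intro k _; linarith [(hfact N hN k).1]
    · intro k _; exact (hfact N hN k).2
  have hPanti : ∀ N, Good N → ∀ m n, m ≤ n → P N n ≤ P N m := by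
    intro N hN
    have : ∀ n, P N (n + 1) ≤ P N n := by
      intro n
      rw [hPsucc]
      calc P N n * (1 - (t / N) * B n + e₂ (t / N)) ≤ P N n * 1 :=
            mul_le_mul_of_nonneg_left (hfact N hN n).2 (hPpos N hN n).le
        _ = P N n := mul_one _
    exact fun m n h => antitone_nat_of_succ_le this h
  -- the error-term helpers
  have he₁' : ∀ δ : ℝ, 0 < δ → ∃ ε₀ > 0, ∀ ε : ℝ, 0 < ε → ε < ε₀ → |e₁ ε| ≤ δ * ε :=
    fun δ hδ => (he δ hδ).imp fun ε₀ h => ⟨h.1, fun ε h1 h2 => (h.2 ε h1 h2).1⟩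
  have he₂' : ∀ δ : ℝ, 0 < δ → ∃ ε₀ > 0, ∀ ε : ℝ, 0 < ε → ε < ε₀ → |e₂ ε| ≤ δ * ε :=
    fun δ hδ => (he δ hδ).imp fun ε₀ h => ⟨h.1, fun ε h1 h2 => (h.2 ε h1 h2).2⟩
  have hNe₁ := tendsto_N_mul_err t ht e₁ he₁'
  have hNe₂ := tendsto_N_mul_err t ht e₂ he₂'
  -- sum of P bound
  have hQbd : ∀ N, Good N → 0 ≤ (∑ n ∈ range N, P N n) ∧ (∑ n ∈ range N, P N n) ≤ N := by
    intro N hN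
    constructor
    · exact Finset.sum_nonneg fun n _ => (hPpos N hN n).le
    · calc (∑ n ∈ range N, P N n) ≤ ∑ _n ∈ range N, (1:ℝ) :=
            Finset.sum_le_sum fun n _ => hPle1 N hN n
        _ = N := by simp
  have hQtend : ∀ (e : ℝ → ℝ), Tendsto (fun N : ℕ => (N:ℝ) * e (t / N)) atTop (nhds 0) →
      Tendsto (fun N : ℕ => e (t / N) * ∑ n ∈ range N, P N n) atTop (nhds 0) := by
    intro e hNe
    apply squeeze_zero_norm' (a := fun N : ℕ => |(N:ℝ) * e (t / N)|)
    · filter_upwards [hGood] with N hN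
      rw [Real.norm_eq_abs, abs_mul, abs_mul, abs_of_nonneg (hQbd N hN).1,
        abs_of_nonneg (show (0:ℝ) ≤ (N:ℝ) by positivity)]
      calc |e (t / N)| * (∑ n ∈ range N, P N n) ≤ |e (t / N)| * N :=
            mul_le_mul_of_nonneg_left (hQbd N hN).2 (abs_nonneg _)
        _ = (N:ℝ) * |e (t / N)| := mul_comm _ _
    · simpa using hNe.abs
  -- telescoping identity
  have hW_eq : ∀ N : ℕ, (∑ n ∈ range N, (t / N) * B n * P N n)
      = 1 - P N N + e₂ (t / N) * ∑ n ∈ range N, P N n := by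
    intro N
    have tele : ∑ n ∈ range N, (P N n - P N (n + 1)) = P N 0 - P N N :=
      Finset.sum_range_sub' (fun n => P N n) N
    calc (∑ n ∈ range N, (t / N) * B n * P N n)
        = ∑ n ∈ range N, ((P N n - P N (n + 1)) + e₂ (t / N) * P N n) := by
          refine Finset.sum_congr rfl fun n _ => ?_
          rw [hPsucc]; ring
      _ = (P N 0 - P N N) + e₂ (t / N) * ∑ n ∈ range N, P N n := by
          rw [Finset.sum_add_distrib, tele, Finset.mul_sum]
      _ = 1 - P N N + e₂ (t / N) * ∑ n ∈ range N, P N n := by rw [hP0]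
  -- convergence of log P N N
  have hlogP : Tendsto (fun N : ℕ => Real.log (P N N)) atTop (nhds (-(t * I))) := by
    have hmain : ∀ᶠ N in atTop,
        |Real.log (P N N) - (-(t * ((∑ k ∈ range N, B k) / N)) + (N:ℝ) * e₂ (t / N))|
          ≤ 2 * t ^ 2 * (2 * C + βstar) ^ 2 / N := by
      filter_upwards [hGood] with N hN
      obtain ⟨hN1, hN2, hN3⟩ := hN
      have hNpos : (0:ℝ) < N := by exact_mod_cast hN1
      have htN : 0 < t / N := by positivity
      have he₂b := abs_le.1 (hctrlg (t / N) htN hN2).2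
      set x : ℕ → ℝ := fun k => (t / N) * B k - e₂ (t / N) with hxdef
      have hx0 : ∀ k, 0 ≤ x k := by
        intro k
        have hm := mul_le_mul_of_nonneg_left (hBlb k) htN.le
        simp only [hxdef]
        nlinarith [he₂b.2, htN.le, hβstar.le]
      have hxle : ∀ k, x k ≤ (t / N) * (2 * C + βstar) := by
        intro k
        have hm := mul_le_mul_of_nonneg_left (hBub k) htN.le
        simp only [hxdef]
        nlinarith [he₂b.1, htN.le, hβstar.le]
      have hxhalf : ∀ k, x k ≤ 1 / 2 := fun k => (hxle k).trans hN3
      have hlog : Real.log (P N N) = ∑ k ∈ range N, Real.log (1 - x k) := by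
        rw [hPdef]
        simp only
        rw [Real.log_prod]
        · refine Finset.sum_congr rfl fun k _ => ?_
          congr 1
          simp only [hxdef]; ring
        · intro k _
          have := (hfact N ⟨hN1, hN2, hN3⟩ k).1
          intro hzero
          rw [hzero] at this
          linarith
      have hsum : (-(t * ((∑ k ∈ range N, B k) / N)) + (N:ℝ) * e₂ (t / N))
          = ∑ k ∈ range N, (-(x k)) := by
        simp only [hxdef]
        rw [Finset.sum_neg_distrib, Finset.sum_sub_distrib]
        rw [Finset.sum_const, card_range, ← Finset.mul_sum]
        field_simp
        try ring
      rw [hlog, hsum, ← Finset.sum_sub_distrib]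
      calc |∑ k ∈ range N, (Real.log (1 - x k) - -(x k))|
          ≤ ∑ k ∈ range N, |Real.log (1 - x k) + x k| := by
            refine (Finset.abs_sum_le_sum_abs _ _).trans ?_
            apply le_of_eq
            refine Finset.sum_congr rfl fun k _ => ?_
            congr 1
            ring
        _ ≤ ∑ k ∈ range N, 2 * ((t / N) * (2 * C + βstar)) ^ 2 := by
            refine Finset.sum_le_sum fun k _ => ?_
            refine (log_one_sub_bound (hx0 k) (hxhalf k)).trans ?_
            have h1 : x k ^ 2 ≤ ((t / N) * (2 * C + βstar)) ^ 2 := by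
              apply sq_le_sq'
              · have hb : (0:ℝ) ≤ (t / N) * (2 * C + βstar) :=
                  mul_nonneg (by positivity) (by linarith)
                exact le_trans (neg_nonpos_of_nonneg hb) (hx0 k)
              · exact hxle k
            linarith
        _ = 2 * t ^ 2 * (2 * C + βstar) ^ 2 / N := by
            rw [Finset.sum_const, card_range, nsmul_eq_mul]
            field_simp
            try ring
    have hz : Tendsto (fun N : ℕ =>
        Real.log (P N N) - (-(t * ((∑ k ∈ range N, B k) / N)) + (N:ℝ) * e₂ (t / N)))
        atTop (nhds 0) := by
      apply squeeze_zero_norm' (a := fun N : ℕ => 2 * t ^ 2 * (2 * C + βstar) ^ 2 / N)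
      · filter_upwards [hmain] with N hN
        exact hN
      · exact tendsto_const_div_atTop_nhds_zero_nat _
    have hrest : Tendsto (fun N : ℕ =>
        (-(t * ((∑ k ∈ range N, B k) / N)) + (N:ℝ) * e₂ (t / N))) atTop (nhds (-(t * I))) := by
      have h1 : Tendsto (fun N : ℕ => -(t * ((∑ k ∈ range N, B k) / N))) atTop (nhds (-(t * I))) :=
        (hI.const_mul t).neg
      simpa using h1.add hNe₂
    have := hz.add hrest
    simp only [sub_add_cancel, zero_add] at this
    exact this
  have hPNN : Tendsto (fun N : ℕ => P N N) atTop (nhds (Real.exp (-(t * I)))) := by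
    have hcomp : Tendsto (fun N : ℕ => Real.exp (Real.log (P N N))) atTop
        (nhds (Real.exp (-(t * I)))) := (Real.continuous_exp.continuousAt.tendsto).comp hlogP
    refine hcomp.congr' ?_
    filter_upwards [hGood] with N hN
    exact Real.exp_log (hPpos N hN N)
  -- W convergence
  have hW : Tendsto (fun N : ℕ => ∑ n ∈ range N, (t / N) * B n * P N n) atTop
      (nhds (1 - Real.exp (-(t * I)))) := by
    have h1 : Tendsto (fun N : ℕ => 1 - P N N + e₂ (t / N) * ∑ n ∈ range N, P N n) atTop
        (nhds (1 - Real.exp (-(t * I)))) := by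
      have := (tendsto_const_nhds (x := (1:ℝ)).sub hPNN).add (hQtend e₂ hNe₂)
      simpa using this
    exact h1.congr fun N => (hW_eq N).symm
  -- the Abel/Birkhoff term
  set g : ℕ → ℝ := fun n => I * b₁ n - I₁ * B n with hgdef
  have hgabs : ∀ n, |g n| ≤ 4 * C ^ 2 := by
    intro n
    have h1 := hb₁lb n; have h2 := hb₁ub n; have h3 := hBlb n; have h4 := hBub n
    have hb₁0 : 0 < b₁ n := lt_of_lt_of_le hβstar h1
    have hB0 : 0 < B n := lt_of_lt_of_le (by positivity) h3
    have hI₁0 : 0 < I₁ := lt_of_lt_of_le hβstar hI₁lb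
    have p1 : 0 < I * b₁ n := mul_pos hIpos hb₁0
    have p2 : I * b₁ n ≤ 2 * C * C := mul_le_mul hIub h2 hb₁0.le (by linarith)
    have p3 : 0 < I₁ * B n := mul_pos hI₁0 hB0
    have p4 : I₁ * B n ≤ C * (2 * C) := mul_le_mul hI₁ub h4 hB0.le hC0.le
    rw [abs_le]
    constructor <;> [skip; skip] <;> simp only [hgdef] <;> nlinarith
  have hGavg : Tendsto (fun n : ℕ => (∑ k ∈ range n, g k) / n) atTop (nhds 0) := by
    have heq : ∀ n : ℕ, (∑ k ∈ range n, g k) / n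
        = I * ((∑ k ∈ range n, b₁ k) / n) - I₁ * ((∑ k ∈ range n, B k) / n) := by
      intro n
      simp only [hgdef]
      rw [Finset.sum_sub_distrib, ← Finset.mul_sum, ← Finset.mul_sum, sub_div,
        mul_div_assoc, mul_div_assoc]
    have h2 : Tendsto (fun n : ℕ => I * ((∑ k ∈ range n, b₁ k) / n)
        - I₁ * ((∑ k ∈ range n, B k) / n)) atTop (nhds (I * I₁ - I₁ * I)) :=
      (hI₁.const_mul I).sub (hI.const_mul I₁)
    rw [show I * I₁ - I₁ * I = 0 by ring] at h2
    exact h2.congr fun n => (heq n).symm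
  have hE : Tendsto (fun N : ℕ => ∑ n ∈ range N, (t / N) * g n * P N n) atTop (nhds 0) := by
    rw [NormedAddCommGroup.tendsto_nhds_zero]
    intro δ hδ
    set Kg : ℝ := 4 * C ^ 2 + 1 with hKgdef
    have hKgpos : 0 < Kg := by positivity
    have hgabs' : ∀ n, |g n| ≤ Kg := fun n => (hgabs n).trans (by simp [hKgdef])
    set δ' : ℝ := δ / (2 * t + 2) with hδ'def
    have hδ'pos : 0 < δ' := by positivity
    have htδ' : t * δ' < δ / 2 := by
      rw [hδ'def, mul_div_assoc']
      rw [div_lt_div_iff₀ (by positivity) (by positivity)]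
      nlinarith
    obtain ⟨M, hM⟩ := (Metric.tendsto_atTop.1 hGavg) δ' hδ'pos
    have hGbd : ∀ N : ℕ, ∀ n ≤ N, |∑ k ∈ range n, g k| ≤ δ' * N + M * Kg := by
      intro N n hn
      rcases lt_or_ge n M with h | h
      · calc |∑ k ∈ range n, g k| ≤ ∑ k ∈ range n, |g k| := Finset.abs_sum_le_sum_abs _ _
          _ ≤ ∑ _k ∈ range n, Kg := Finset.sum_le_sum fun k _ => hgabs' k
          _ = n * Kg := by rw [Finset.sum_const, card_range, nsmul_eq_mul]
          _ ≤ M * Kg := by gcongr <;> exact_mod_cast h.le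
          _ ≤ δ' * N + M * Kg := le_add_of_nonneg_left (by positivity)
      · rcases Nat.eq_zero_or_pos n with h0 | h0
        · subst h0
          simp only [range_zero, Finset.sum_empty, abs_zero]
          positivity
        · have hn' : (0:ℝ) < n := by exact_mod_cast h0
          have hdist := hM n h
          rw [Real.dist_eq, sub_zero] at hdist
          have habs : |∑ k ∈ range n, g k| = |(∑ k ∈ range n, g k) / n| * n := by
            rw [abs_div, abs_of_pos hn', div_mul_cancel₀]
            exact ne_of_gt hn'
          rw [habs]
          calc |(∑ k ∈ range n, g k) / n| * n ≤ δ' * n :=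
                mul_le_mul_of_nonneg_right hdist.le hn'.le
            _ ≤ δ' * N := by gcongr <;> exact_mod_cast hn
            _ ≤ δ' * N + M * Kg := le_add_of_nonneg_right (by positivity)
    filter_upwards [hGood, (tendsto_const_div_atTop_nhds_zero_nat (t * (M * Kg))).eventually
        (eventually_lt_nhds (half_pos hδ))] with N hN hsmall
    have hN1 := hN.1
    have hNpos : (0:ℝ) < N := by exact_mod_cast hN1
    have hsum_eq : ∑ n ∈ range N, (t / N) * g n * P N n
        = (t / N) * ∑ n ∈ range N, P N n * g n := by
      rw [Finset.mul_sum]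
      exact Finset.sum_congr rfl fun n _ => by ring
    have habel := Finset.sum_range_by_parts (fun n => P N n) g N
    simp only [smul_eq_mul] at habel
    set R : ℝ := δ' * N + M * Kg with hRdef
    have hR0 : 0 ≤ R := by positivity
    have hbound1 : |∑ i ∈ range N, P N i * g i| ≤ R := by
      rw [habel]
      have hterm1 : |P N (N - 1) * ∑ i ∈ range N, g i| ≤ P N (N - 1) * R := by
        rw [abs_mul, abs_of_pos (hPpos N hN (N - 1))]
        exact mul_le_mul_of_nonneg_left (hGbd N N le_rfl) (hPpos N hN (N - 1)).le
      have hterm2 : |∑ i ∈ range (N - 1), (P N (i + 1) - P N i) * ∑ j ∈ range (i + 1), g j|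
          ≤ (P N 0 - P N (N - 1)) * R := by
        calc |∑ i ∈ range (N - 1), (P N (i + 1) - P N i) * ∑ j ∈ range (i + 1), g j|
            ≤ ∑ i ∈ range (N - 1), |(P N (i + 1) - P N i) * ∑ j ∈ range (i + 1), g j| :=
              Finset.abs_sum_le_sum_abs _ _
          _ ≤ ∑ i ∈ range (N - 1), (P N i - P N (i + 1)) * R := by
              refine Finset.sum_le_sum fun i hi => ?_
              rw [abs_mul]
              have hmono := hPanti N hN i (i + 1) (Nat.le_succ i)
              rw [abs_of_nonpos (by linarith : P N (i + 1) - P N i ≤ 0), neg_sub]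
              have hiN : i + 1 ≤ N := by
                have := Finset.mem_range.1 hi
                omega
              exact mul_le_mul_of_nonneg_left (hGbd N (i + 1) hiN) (by linarith)
          _ = (P N 0 - P N (N - 1)) * R := by
              rw [← Finset.sum_mul, Finset.sum_range_sub' (fun n => P N n) (N - 1)]
      calc |P N (N - 1) * (∑ i ∈ range N, g i)
            - ∑ i ∈ range (N - 1), (P N (i + 1) - P N i) * ∑ j ∈ range (i + 1), g j|
          ≤ |P N (N - 1) * ∑ i ∈ range N, g i|
            + |∑ i ∈ range (N - 1), (P N (i + 1) - P N i) * ∑ j ∈ range (i + 1), g j| :=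
            abs_sub _ _
        _ ≤ P N (N - 1) * R + (P N 0 - P N (N - 1)) * R := add_le_add hterm1 hterm2
        _ = P N 0 * R := by ring
        _ = R := by rw [hP0, one_mul]
    rw [Real.norm_eq_abs, hsum_eq, abs_mul, abs_of_pos (by positivity : (0:ℝ) < t / N)]
    calc (t / N) * |∑ i ∈ range N, P N i * g i| ≤ (t / N) * R :=
          mul_le_mul_of_nonneg_left hbound1 (by positivity)
      _ = t * δ' + t * (M * Kg) / N := by
          rw [hRdef]
          field_simp
      _ < δ / 2 + δ / 2 := add_lt_add htδ' hsmall
      _ = δ := by ring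
  -- assemble
  have hU_eq : ∀ N : ℕ, (∑ n ∈ range N, (t / N) * b₁ n * P N n)
      = ((I₁ * (∑ n ∈ range N, (t / N) * B n * P N n))
        + (∑ n ∈ range N, (t / N) * g n * P N n)) / I := by
    intro N
    rw [eq_div_iff (ne_of_gt hIpos), Finset.sum_mul, Finset.mul_sum, ← Finset.sum_add_distrib]
    refine Finset.sum_congr rfl fun n _ => ?_
    simp only [hgdef]
    ring
  have hU : Tendsto (fun N : ℕ => ∑ n ∈ range N, (t / N) * b₁ n * P N n) atTop
      (nhds ((I₁ * (1 - Real.exp (-(t * I))) + 0) / I)) := by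
    have := ((hW.const_mul I₁).add hE).div_const I
    exact this.congr fun N => (hU_eq N).symm
  have hT_eq : ∀ N : ℕ, (∑ n ∈ range N, ((t / N) * b₁ n + e₁ (t / N)) * P N n)
      = (∑ n ∈ range N, (t / N) * b₁ n * P N n) + e₁ (t / N) * ∑ n ∈ range N, P N n := by
    intro N
    rw [Finset.mul_sum, ← Finset.sum_add_distrib]
    exact Finset.sum_congr rfl fun n _ => by ring
  have hfinal := hU.add (hQtend e₁ hNe₁)
  have hval : (I₁ * (1 - Real.exp (-(t * I))) + 0) / I + 0
      = (I₁ / I) * (1 - Real.exp (-t * I)) := by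
    rw [neg_mul]
    ring
  rw [← hval]
  exact hfinal.congr fun N => (hT_eq N).symm

end Det

/-- Exponential-distribution lemma for random holes: for a.e. ω,
`∑_{n<t/ε} (εβ₁(σⁿω)+o(ε)) ∏_{k<n} (1−ε(β₁+β₂)(σᵏω)+o(ε))` converges, as ε → 0
along ε = t/N, to `(∫β₁/∫(β₁+β₂))·(1−exp(−t∫(β₁+β₂)))`, the o(ε) errors being
uniform in ω. -/
theorem stmt3 {Ω : Type*} [MeasurableSpace Ω] (μ : Measure Ω) [IsProbabilityMeasure μ]
    (σ : Ω → Ω) (hσinv : Function.Bijective σ) (hσ : Ergodic σ μ)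
    (β₁ β₂ : Ω → ℝ) (hβ₁m : Measurable β₁) (hβ₂m : Measurable β₂)
    (βstar C : ℝ) (hβstar : 0 < βstar)
    (hβ₁lb : ∀ ω, βstar ≤ β₁ ω) (hβ₂lb : ∀ ω, βstar ≤ β₂ ω)
    (hβ₁ub : ∀ ω, β₁ ω ≤ C) (hβ₂ub : ∀ ω, β₂ ω ≤ C)
    (t : ℝ) (ht : 0 < t)
    (e₁ e₂ : ℝ → ℝ)
    (he : ∀ δ : ℝ, 0 < δ → ∃ ε₀ > 0, ∀ ε : ℝ, 0 < ε → ε < ε₀ →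
      |e₁ ε| ≤ δ * ε ∧ |e₂ ε| ≤ δ * ε) :
    ∀ᵐ ω ∂μ, Tendsto
      (fun N : ℕ => ∑ n ∈ Finset.range N,
        ((t / N) * β₁ (σ^[n] ω) + e₁ (t / N)) *
          ∏ k ∈ Finset.range n,
            (1 - (t / N) * (β₁ (σ^[k] ω) + β₂ (σ^[k] ω)) + e₂ (t / N)))
      atTop
      (nhds (((∫ ω, β₁ ω ∂μ) / (∫ ω, (β₁ ω + β₂ ω) ∂μ)) *
        (1 - Real.exp (-t * ∫ ω, (β₁ ω + β₂ ω) ∂μ)))) := by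
  have hne : Nonempty Ω := by
    by_contra h
    rw [not_nonempty_iff] at h
    have h0 : μ Set.univ = 0 := by
      rw [Set.univ_eq_empty_iff.2 h]
      exact measure_empty
    rw [measure_univ] at h0
    exact one_ne_zero h0
  obtain ⟨ω₀⟩ := hne
  have hβC : βstar ≤ C := le_trans (hβ₁lb ω₀) (hβ₁ub ω₀)
  have hC0 : (0:ℝ) ≤ C := le_trans hβstar.le hβC
  have hβ₁abs : ∀ ω, |β₁ ω| ≤ C := fun ω =>
    abs_le.2 ⟨by linarith [hβ₁lb ω], hβ₁ub ω⟩
  have hBm : Measurable (fun ω => β₁ ω + β₂ ω) := hβ₁m.add hβ₂m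
  have hBabs : ∀ ω, |β₁ ω + β₂ ω| ≤ 2 * C := fun ω =>
    abs_le.2 ⟨by linarith [hβ₁lb ω, hβ₂lb ω], by linarith [hβ₁ub ω, hβ₂ub ω]⟩
  have hb1 := birkhoff_ae_tendsto hσ hβ₁m hC0 hβ₁abs
  have hb2 := birkhoff_ae_tendsto hσ hBm (by linarith) hBabs
  filter_upwards [hb1, hb2] with ω hω1 hω2
  exact det_tendsto t βstar C (∫ ω, β₁ ω ∂μ) (∫ ω, (β₁ ω + β₂ ω) ∂μ) ht hβstar
    (fun n => β₁ (σ^[n] ω)) (fun n => β₂ (σ^[n] ω))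
    (fun n => hβ₁lb _) (fun n => hβ₂lb _) (fun n => hβ₁ub _) (fun n => hβ₂ub _)
    hω1 hω2 e₁ e₂ he
end

section
/- Escape estimate for essential sets: Suppose for each n, E_n ⊆ I_j are measurable sets with m̃ε ≤ Leb_j(E_n) ≤ M̃ε for constants 0 < m̃ ≤ M̃ and all n. Suppose further that for all n and k ≥ M₀+1, the conditional measure of returning to a hole after k more steps satisfies Leb_j(return at step n+k | E_n) ≤ (K₂/m̃)(ε + Λ^{−k}) with Λ > 1. Then ∑_{n=0}^{S/ε} Leb_j(E_n)·∑_{k=M₀+1}^{ξ/ε} Leb_j(return at n+k | E_n) ≤ C(S+ε)·( (Λξ + M₀ε(1−Λ) + Λ^{−M₀} − Λ^{−ξ/ε} − ξ)/(Λ−1) ), and hence the limit as ε→0 is at most (CS/(Λ−1))(Λ^{−M₀} − ξ + Λξ), which tends to 0 as ξ → 0 and M₀ → ∞. -/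
open Filter

/-- Escape estimate for essential sets: with `m̃ε ≤ Leb_j(E_n) ≤ M̃ε` and the
conditional return bound `cond n k ≤ (K₂/m̃)(ε + Λ^{-k})` for `k ≥ M₀+1`,
the double sum over `n ≤ S/ε`, `M₀+1 ≤ k ≤ ξ/ε` is bounded by
`C(S+ε)·((Λξ + M₀ε(1−Λ) + Λ^{−M₀} − Λ^{−ξ/ε} − ξ)/(Λ−1))`; moreover this bound
converges, as ε → 0 (ε = ξ/Nξ, Nξ → ∞), to `(CS/(Λ−1))(Λ^{−M₀} − ξ + Λξ)`. -/
theorem stmt9 (Λ mtil Mtil K₂ : ℝ) (hΛ : 1 < Λ)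
    (hm : 0 < mtil) (hmM : mtil ≤ Mtil) (hK₂ : 0 < K₂) :
    ∃ C > 0,
      (∀ (ε S ξ : ℝ) (M₀ NS Nξ : ℕ) (lebE : ℕ → ℝ) (cond : ℕ → ℕ → ℝ),
        0 < ε → (NS : ℝ) * ε = S → (Nξ : ℝ) * ε = ξ → M₀ < Nξ →
        (∀ n, mtil * ε ≤ lebE n ∧ lebE n ≤ Mtil * ε) →
        (∀ n k, M₀ + 1 ≤ k → 0 ≤ cond n k ∧
          cond n k ≤ (K₂ / mtil) * (ε + Λ ^ (-(k : ℤ)))) →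
        ∑ n ∈ Finset.range (NS + 1),
            lebE n * ∑ k ∈ Finset.Icc (M₀ + 1) Nξ, cond n k ≤
          C * (S + ε) *
            ((Λ * ξ + (M₀ : ℝ) * ε * (1 - Λ) + Λ ^ (-(M₀ : ℤ)) -
                Λ ^ (-(Nξ : ℤ)) - ξ) / (Λ - 1))) ∧
      (∀ (S ξ : ℝ) (M₀ : ℕ), 0 < S → 0 < ξ →
        Tendsto (fun Nξ : ℕ =>
            C * (S + ξ / Nξ) *
              ((Λ * ξ + (M₀ : ℝ) * (ξ / Nξ) * (1 - Λ) + Λ ^ (-(M₀ : ℤ)) -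
                  Λ ^ (-(Nξ : ℤ)) - ξ) / (Λ - 1)))
          atTop
          (nhds (C * S * (Λ ^ (-(M₀ : ℤ)) - ξ + Λ * ξ) / (Λ - 1)))) := by
  have hΛ0 : (0:ℝ) < Λ := by linarith
  have hΛ1 : Λ - 1 ≠ 0 := by intro h; nlinarith
  have hΛne : Λ ≠ 0 := ne_of_gt hΛ0
  have hzp : ∀ k : ℕ, Λ ^ (-(k:ℤ)) = (Λ⁻¹) ^ k := by
    intro k; rw [zpow_neg, zpow_natCast, inv_pow]
  have hinv1 : Λ⁻¹ ≠ 1 := by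
    intro h
    have : Λ = 1 := by field_simp at h; linarith
    linarith
  have hMtil : 0 < Mtil := lt_of_lt_of_le hm hmM
  refine ⟨Mtil * K₂ / mtil, div_pos (mul_pos hMtil hK₂) hm, ?_, ?_⟩
  · intro ε S ξ M₀ NS Nξ lebE cond hε hS hξ hM hleb hcond
    have hMle : M₀ ≤ Nξ := le_of_lt hM
    have hgeom : ∑ k ∈ Finset.Icc (M₀+1) Nξ, Λ ^ (-(k:ℤ)) =
        (Λ ^ (-(M₀:ℤ)) - Λ ^ (-(Nξ:ℤ))) / (Λ - 1) := by
      rw [← Finset.Ico_add_one_right_eq_Icc]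
      simp only [hzp]
      rw [geom_sum_Ico hinv1 (by omega),
        div_eq_div_iff (sub_ne_zero.mpr hinv1) hΛ1, pow_succ, pow_succ]
      field_simp
      ring
    set T : ℝ := (K₂/mtil) * (((Nξ - M₀ : ℕ) : ℝ) * ε +
        (Λ ^ (-(M₀:ℤ)) - Λ ^ (-(Nξ:ℤ))) / (Λ - 1)) with hT
    have hsum : ∀ n, 0 ≤ ∑ k ∈ Finset.Icc (M₀+1) Nξ, cond n k ∧
        ∑ k ∈ Finset.Icc (M₀+1) Nξ, cond n k ≤ T := by
      intro n
      constructor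
      · exact Finset.sum_nonneg fun k hk =>
          (hcond n k (Finset.mem_Icc.mp hk).1).1
      · calc ∑ k ∈ Finset.Icc (M₀+1) Nξ, cond n k
            ≤ ∑ k ∈ Finset.Icc (M₀+1) Nξ, (K₂/mtil) * (ε + Λ ^ (-(k:ℤ))) :=
              Finset.sum_le_sum fun k hk =>
                (hcond n k (Finset.mem_Icc.mp hk).1).2
          _ = T := by
              rw [← Finset.mul_sum, Finset.sum_add_distrib, hgeom,
                Finset.sum_const, Nat.card_Icc,
                show Nξ + 1 - (M₀ + 1) = Nξ - M₀ from by omega, hT]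
              simp only [nsmul_eq_mul]
    have hTnn : 0 ≤ T := le_trans (hsum 0).1 (hsum 0).2
    calc ∑ n ∈ Finset.range (NS + 1),
            lebE n * ∑ k ∈ Finset.Icc (M₀ + 1) Nξ, cond n k
        ≤ ∑ n ∈ Finset.range (NS + 1), (Mtil * ε) * T := by
          refine Finset.sum_le_sum fun n _ => mul_le_mul (hleb n).2
            (hsum n).2 (hsum n).1 (mul_nonneg hMtil.le hε.le)
      _ = ((NS:ℝ) + 1) * ((Mtil * ε) * T) := by
          rw [Finset.sum_const, Finset.card_range]; push_cast; ring
      _ = Mtil * K₂ / mtil * (S + ε) *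
            ((Λ * ξ + (M₀ : ℝ) * ε * (1 - Λ) + Λ ^ (-(M₀ : ℤ)) -
                Λ ^ (-(Nξ : ℤ)) - ξ) / (Λ - 1)) := by
          rw [hT, ← hS, ← hξ, Nat.cast_sub hMle]
          field_simp
          ring
  · intro S ξ M₀ hS hξ
    have h1 : Tendsto (fun n : ℕ => ξ / n) atTop (nhds 0) :=
      tendsto_const_div_atTop_nhds_zero_nat ξ
    have h2 : Tendsto (fun n : ℕ => Λ ^ (-(n:ℤ))) atTop (nhds 0) := by
      simp only [hzp]
      exact tendsto_pow_atTop_nhds_zero_of_lt_one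
        (by positivity) (inv_lt_one_of_one_lt₀ hΛ)
    have hmain : Tendsto (fun Nξ : ℕ =>
        Mtil * K₂ / mtil * (S + ξ / Nξ) *
          ((Λ * ξ + (M₀ : ℝ) * (ξ / Nξ) * (1 - Λ) + Λ ^ (-(M₀ : ℤ)) -
              Λ ^ (-(Nξ : ℤ)) - ξ) / (Λ - 1)))
        atTop (nhds (Mtil * K₂ / mtil * (S + 0) *
          ((Λ * ξ + (M₀ : ℝ) * 0 * (1 - Λ) + Λ ^ (-(M₀ : ℤ)) - 0 - ξ) /
            (Λ - 1)))) :=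
      ((tendsto_const_nhds.add h1).const_mul _).mul
        (((((tendsto_const_nhds.add ((h1.const_mul _).mul_const _)).add
          tendsto_const_nhds).sub h2).sub tendsto_const_nhds).div_const _)
    convert hmain using 2
    field_simp
    ring
end
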